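/- arXiv:2112.13751 — 7 statements merged into one kernel-verified Lean document; each statement's English description precedes it below -/
import Mathlib

section
/- Let A be a randomized algorithm mapping finite subsets of V to probability measures on Ω, let D ⊆ V be a finite set, x ∈ V \ D, and 0 < ξ < 1. Suppose that for every subset S ⊆ D and every measurable C ⊆ Ω one has Pr[A(S ∪ {x}) ∈ C] ≤ e^ε·Pr[A(S) ∈ C] + δ (with ε ≥ 0, δ ≥ 0). Then for every measurable C ⊆ Ω, the subsampled algorithm A' satisfies Pr[A'(D ∪ {x}) ∈ C] ≤ (ξ(e^ε − 1) + 1)·Pr[A'(D) ∈ C] + δξ. -/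
open Finset MeasureTheory

/-- `Pr[A'(D) ∈ C]` for the subsampled algorithm `A'` that includes each element of `D`
independently with probability `ξ` and runs `A` on the resulting subset. -/
noncomputable def subPr {V Ω : Type*} [MeasurableSpace Ω]
    (A : Finset V → Measure Ω) (ξ : ℝ) (D : Finset V) (C : Set Ω) : ℝ :=
  ∑ S ∈ D.powerset, ξ ^ S.card * (1 - ξ) ^ (D.card - S.card) * (A S C).toReal

lemma weights_sum_one {V : Type*} [DecidableEq V] (ξ : ℝ) (D : Finset V) :
    ∑ S ∈ D.powerset, ξ ^ S.card * (1 - ξ) ^ (D.card - S.card) = 1 := by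
  have h := Finset.prod_add (fun _ : V => ξ) (fun _ : V => (1 - ξ)) D
  simp only [Finset.prod_const, add_sub_cancel, one_pow] at h
  refine Eq.trans ?_ h.symm
  apply Finset.sum_congr rfl
  intro S hS
  rw [Finset.card_sdiff_of_subset (Finset.mem_powerset.mp hS)]

theorem subsampled_upper_bound {V Ω : Type*} [DecidableEq V] [MeasurableSpace Ω]
    (A : Finset V → Measure Ω)
    (hA : ∀ S : Finset V, IsProbabilityMeasure (A S))
    (D : Finset V) (x : V) (hx : x ∉ D)
    (ξ ε δ : ℝ) (hξ0 : 0 < ξ) (hξ1 : ξ < 1) (hε : 0 ≤ ε) (hδ : 0 ≤ δ)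
    (hDP : ∀ S : Finset V, S ⊆ D → ∀ C : Set Ω, MeasurableSet C →
      ((A (insert x S)) C).toReal ≤ Real.exp ε * ((A S) C).toReal + δ)
    (C : Set Ω) (hC : MeasurableSet C) :
    subPr A ξ (insert x D) C ≤ (ξ * (Real.exp ε - 1) + 1) * subPr A ξ D C + δ * ξ := by
  have hdisj : Disjoint D.powerset (D.powerset.image (insert x)) := by
    rw [Finset.disjoint_left]
    intro S hS hS'
    rw [Finset.mem_image] at hS'
    obtain ⟨T, hT, rfl⟩ := hS'
    exact hx (Finset.mem_powerset.mp hS (Finset.mem_insert_self x T))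
  have hinj : ∀ S ∈ D.powerset, ∀ T ∈ D.powerset, insert x S = insert x T → S = T := by
    intro S hS T hT h
    have hxS : x ∉ S := fun h' => hx (Finset.mem_powerset.mp hS h')
    have hxT : x ∉ T := fun h' => hx (Finset.mem_powerset.mp hT h')
    rw [← Finset.erase_insert hxS, ← Finset.erase_insert hxT, h]
  have hcard : (insert x D).card = D.card + 1 := Finset.card_insert_of_notMem hx
  have hsplit : subPr A ξ (insert x D) C =
      (1 - ξ) * subPr A ξ D C +
      ξ * ∑ S ∈ D.powerset, ξ ^ S.card * (1 - ξ) ^ (D.card - S.card) * (A (insert x S) C).toReal := by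
    rw [subPr, Finset.powerset_insert, Finset.sum_union hdisj, Finset.sum_image hinj,
      subPr, Finset.mul_sum, Finset.mul_sum]
    congr 1
    · apply Finset.sum_congr rfl
      intro S hS
      have hSD : S.card ≤ D.card := Finset.card_le_card (Finset.mem_powerset.mp hS)
      rw [hcard]
      have : D.card + 1 - S.card = (D.card - S.card) + 1 := by omega
      rw [this, pow_succ]
      ring
    · apply Finset.sum_congr rfl
      intro S hS
      have hxS : x ∉ S := fun h' => hx (Finset.mem_powerset.mp hS h')
      have hSD : S.card ≤ D.card := Finset.card_le_card (Finset.mem_powerset.mp hS)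
      rw [Finset.card_insert_of_notMem hxS, hcard]
      have : D.card + 1 - (S.card + 1) = D.card - S.card := by omega
      rw [this, pow_succ]
      ring
  have hbound : ∑ S ∈ D.powerset, ξ ^ S.card * (1 - ξ) ^ (D.card - S.card) * (A (insert x S) C).toReal
      ≤ Real.exp ε * subPr A ξ D C + δ := by
    have : ∑ S ∈ D.powerset, ξ ^ S.card * (1 - ξ) ^ (D.card - S.card) * (A (insert x S) C).toReal
        ≤ ∑ S ∈ D.powerset, ξ ^ S.card * (1 - ξ) ^ (D.card - S.card) *
          (Real.exp ε * (A S C).toReal + δ) := by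
      apply Finset.sum_le_sum
      intro S hS
      have hw : 0 ≤ ξ ^ S.card * (1 - ξ) ^ (D.card - S.card) :=
        mul_nonneg (pow_nonneg hξ0.le _) (pow_nonneg (by linarith) _)
      exact mul_le_mul_of_nonneg_left (hDP S (Finset.mem_powerset.mp hS) C hC) hw
    calc _ ≤ _ := this
      _ = Real.exp ε * subPr A ξ D C + δ := by
        simp only [mul_add, Finset.sum_add_distrib]
        rw [subPr, Finset.mul_sum, ← Finset.sum_mul, weights_sum_one, one_mul]
        congr 1
        apply Finset.sum_congr rfl
        intro S hS
        ring
  have hP0 : 0 ≤ subPr A ξ D C := by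
    apply Finset.sum_nonneg
    intro S hS
    exact mul_nonneg (mul_nonneg (pow_nonneg hξ0.le _) (pow_nonneg (by linarith) _))
      ENNReal.toReal_nonneg
  rw [hsplit]
  nlinarith [mul_le_mul_of_nonneg_left hbound hξ0.le]
end

section
/- Let A be a randomized algorithm mapping finite subsets of V to probability measures on Ω, let D ⊆ V be a finite set, x ∈ V \ D, and 0 < ξ < 1. Suppose that for every subset S ⊆ D and every measurable C ⊆ Ω one has Pr[A(S) ∈ C] ≤ e^ε·Pr[A(S ∪ {x}) ∈ C] + δ (with ε ≥ 0, δ ≥ 0). Then for every measurable C ⊆ Ω, the subsampled algorithm A' satisfies Pr[A'(D ∪ {x}) ∈ C] ≥ (ξ(e^{−ε} − 1) + 1)·Pr[A'(D) ∈ C] − e^{−ε}δξ; equivalently, Pr[A'(D) ∈ C] ≤ Pr[A'(D ∪ {x}) ∈ C]/(ξ(e^{−ε} − 1) + 1) + e^{−ε}δξ/(ξ(e^{−ε} − 1) + 1). -/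
open Finset MeasureTheory

theorem subsampled_lower_bound {V Ω : Type*} [DecidableEq V] [MeasurableSpace Ω]
    (A : Finset V → Measure Ω)
    (hA : ∀ S : Finset V, IsProbabilityMeasure (A S))
    (D : Finset V) (x : V) (hx : x ∉ D)
    (ξ ε δ : ℝ) (hξ0 : 0 < ξ) (hξ1 : ξ < 1) (hε : 0 ≤ ε) (hδ : 0 ≤ δ)
    (hDP : ∀ S : Finset V, S ⊆ D → ∀ C : Set Ω, MeasurableSet C →
      ((A S) C).toReal ≤ Real.exp ε * ((A (insert x S)) C).toReal + δ)
    (C : Set Ω) (hC : MeasurableSet C) :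
    subPr A ξ (insert x D) C ≥
        (ξ * (Real.exp (-ε) - 1) + 1) * subPr A ξ D C - Real.exp (-ε) * δ * ξ ∧
      subPr A ξ D C ≤
        subPr A ξ (insert x D) C / (ξ * (Real.exp (-ε) - 1) + 1) +
          Real.exp (-ε) * δ * ξ / (ξ * (Real.exp (-ε) - 1) + 1) := by
  classical
  set p : Finset V → ℝ := fun S => ((A S) C).toReal with hpdef
  have hp0 : ∀ S, 0 ≤ p S := fun S => ENNReal.toReal_nonneg
  set w : Finset V → ℝ := fun S => ξ ^ S.card * (1 - ξ) ^ (D.card - S.card) with hwdef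
  have hξ1' : (0:ℝ) ≤ 1 - ξ := by linarith
  have hw0 : ∀ S, 0 ≤ w S := fun S =>
    mul_nonneg (pow_nonneg hξ0.le _) (pow_nonneg hξ1' _)
  have hw1 : ∑ S ∈ D.powerset, w S = 1 := by
    have h := Finset.prod_add (fun _ : V => ξ) (fun _ : V => 1 - ξ) D
    simp only [add_sub_cancel, Finset.prod_const, one_pow] at h
    rw [Finset.sum_congr rfl (fun t ht => ?_)] at h
    · exact h.symm
    · rw [Finset.card_sdiff_of_subset (Finset.mem_powerset.mp ht)]
  have hsubD : subPr A ξ D C = ∑ S ∈ D.powerset, w S * p S := rfl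
  -- split the powerset of insert x D
  have hdisj : Disjoint D.powerset (D.powerset.image (insert x)) := by
    rw [Finset.disjoint_left]
    intro S hS hS'
    obtain ⟨T, hT, rfl⟩ := Finset.mem_image.mp hS'
    exact hx (Finset.mem_powerset.mp hS (Finset.mem_insert_self x T))
  have hinj : ∀ S ∈ D.powerset, ∀ T ∈ D.powerset, insert x S = insert x T → S = T := by
    intro S hS T hT h
    have hxS : x ∉ S := fun h' => hx (Finset.mem_powerset.mp hS h')
    have hxT : x ∉ T := fun h' => hx (Finset.mem_powerset.mp hT h')
    ext a
    constructor
    · intro ha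
      have : a ∈ insert x T := h ▸ Finset.mem_insert_of_mem ha
      rcases Finset.mem_insert.mp this with rfl | h'
      · exact absurd ha hxS
      · exact h'
    · intro ha
      have : a ∈ insert x S := h.symm ▸ Finset.mem_insert_of_mem ha
      rcases Finset.mem_insert.mp this with rfl | h'
      · exact absurd ha hxT
      · exact h'
  have hsplit : subPr A ξ (insert x D) C
      = ∑ S ∈ D.powerset, (1 - ξ) * (w S * p S)
        + ∑ S ∈ D.powerset, ξ * (w S * p (insert x S)) := by
    unfold subPr
    rw [Finset.powerset_insert, Finset.sum_union hdisj, Finset.sum_image hinj]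
    congr 1
    · refine Finset.sum_congr rfl fun S hS => ?_
      have hSD := Finset.mem_powerset.mp hS
      have hcard : S.card ≤ D.card := Finset.card_le_card hSD
      rw [Finset.card_insert_of_notMem hx]
      have : D.card + 1 - S.card = (D.card - S.card) + 1 := by omega
      rw [this, pow_succ]
      show ξ ^ S.card * ((1-ξ) ^ (D.card - S.card) * (1-ξ)) * p S = _
      ring
    · refine Finset.sum_congr rfl fun S hS => ?_
      have hSD := Finset.mem_powerset.mp hS
      have hxS : x ∉ S := fun h' => hx (hSD h')
      rw [Finset.card_insert_of_notMem hx, Finset.card_insert_of_notMem hxS]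
      have : D.card + 1 - (S.card + 1) = D.card - S.card := by omega
      rw [this, pow_succ]
      show ξ ^ S.card * ξ * (1-ξ) ^ (D.card - S.card) * p (insert x S) = _
      ring
  -- pointwise bound
  have hkey : ∀ S ∈ D.powerset, Real.exp (-ε) * (p S - δ) ≤ p (insert x S) := by
    intro S hS
    have h1 := hDP S (Finset.mem_powerset.mp hS) C hC
    have h2 : p S - δ ≤ Real.exp ε * p (insert x S) := by
      simpa [p] using sub_le_iff_le_add.mpr h1
    have h3 := mul_le_mul_of_nonneg_left h2 (Real.exp_nonneg (-ε))
    calc Real.exp (-ε) * (p S - δ) ≤ Real.exp (-ε) * (Real.exp ε * p (insert x S)) := h3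
      _ = p (insert x S) := by
          rw [← mul_assoc, ← Real.exp_add]
          simp
  have hbound : ∑ S ∈ D.powerset, ξ * (w S * (Real.exp (-ε) * (p S - δ)))
      ≤ ∑ S ∈ D.powerset, ξ * (w S * p (insert x S)) := by
    refine Finset.sum_le_sum fun S hS => ?_
    exact mul_le_mul_of_nonneg_left
      (mul_le_mul_of_nonneg_left (hkey S hS) (hw0 S)) hξ0.le
  have hlhs : ∑ S ∈ D.powerset, ξ * (w S * (Real.exp (-ε) * (p S - δ)))
      = ξ * Real.exp (-ε) * (subPr A ξ D C - δ) := by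
    have e1 : ∀ S : Finset V, ξ * (w S * (Real.exp (-ε) * (p S - δ)))
        = ξ * Real.exp (-ε) * (w S * p S) - ξ * Real.exp (-ε) * δ * w S := fun S => by ring
    simp_rw [e1]
    rw [Finset.sum_sub_distrib, ← Finset.mul_sum, ← Finset.mul_sum, hsubD, hw1]
    ring
  have hfirst : subPr A ξ (insert x D) C ≥
      (ξ * (Real.exp (-ε) - 1) + 1) * subPr A ξ D C - Real.exp (-ε) * δ * ξ := by
    have h1 : (1 - ξ) * subPr A ξ D C = ∑ S ∈ D.powerset, (1 - ξ) * (w S * p S) := by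
      rw [hsubD, Finset.mul_sum]
    have := hlhs ▸ hbound
    rw [hsplit, ← h1]
    nlinarith [this]
  refine ⟨hfirst, ?_⟩
  have hc : 0 < ξ * (Real.exp (-ε) - 1) + 1 := by
    have h1 : 0 < Real.exp (-ε) := Real.exp_pos _
    nlinarith
  rw [← add_div, le_div_iff₀ hc]
  nlinarith [hfirst]
end

section
/- Let (V,d) be a finite metric space with diameter at most M, D ⊆ V nonempty, k ≥ 1, and let C_OPT ⊆ V with |C_OPT| = k be an optimal k-median clustering of D, i.e. cost^med_avg(D, C_OPT) = med_avg(D,k). Let S = (X_1,…,X_s) be s independent uniform samples from D, and let α ≥ 1, β > 0. Then Pr[ cost^med_avg(S, C_OPT) > (1 + β/α)·med_avg(D,k) ] ≤ exp( −(s/(3M))·med_avg(D,k)·min{ β/α, (β/α)² } ). -/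
open Finset

/-- Average k-median cost of clustering `C` on the finite set `U`. -/
noncomputable def costMedAvg {V : Type*} [MetricSpace V] (U C : Finset V) : ℝ :=
  (∑ v ∈ U, Metric.infDist v (C : Set V)) / U.card

/-- Optimal average k-median cost `med_avg(D, k)`. -/
noncomputable def medAvg (V : Type*) [MetricSpace V] (D : Finset V) (k : ℕ) : ℝ :=
  sInf {y : ℝ | ∃ C : Finset V, C.card = k ∧
    y = ∑ x ∈ D, Metric.infDist x (C : Set V)} / D.card

/-- Average k-median cost of clustering `C` on the sample `f = (X_1, …, X_s)`. -/
noncomputable def sampleCostMed {V : Type*} [MetricSpace V] {D : Finset V} {s : ℕ}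
    (f : Fin s → {x // x ∈ D}) (C : Finset V) : ℝ :=
  (∑ i, Metric.infDist (f i : V) (C : Set V)) / s

/-- Probability of the event `P` under `s` independent uniform samples from `D`,
i.e. under the uniform distribution on `Fin s → D`. -/
noncomputable def samplePr {V : Type*} (D : Finset V) (s : ℕ)
    (P : (Fin s → {x // x ∈ D}) → Prop) : ℝ :=
  (Nat.card {f : Fin s → {x // x ∈ D} // P f} : ℝ) / ((D.card : ℝ) ^ s)

/-- The key logarithmic inequality `2t ≤ (2+t) log(1+t)` for `t ≥ 0`. -/
lemma two_mul_le_log_aux (t : ℝ) (ht : 0 ≤ t) : 2 * t ≤ (2 + t) * Real.log (1 + t) := by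
  have hderiv : ∀ x : ℝ, 0 < x →
      HasDerivAt (fun u : ℝ => (2 + u) * Real.log (1 + u) - 2 * u)
        (Real.log (1 + x) + (2 + x) * (1 / (1 + x)) - 2) x := by
    intro x hx
    have h1 : HasDerivAt (fun u : ℝ => 1 + u) 1 x := (hasDerivAt_id x).const_add 1
    have hlog : HasDerivAt (fun u : ℝ => Real.log (1 + u)) (1 / (1 + x)) x := by
      simpa using h1.log (by linarith)
    have h2 : HasDerivAt (fun u : ℝ => 2 + u) 1 x := (hasDerivAt_id x).const_add 2
    have h4 : HasDerivAt (fun u : ℝ => 2 * u) 2 x := by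
      simpa using (hasDerivAt_id x).const_mul 2
    have := (h2.mul hlog).sub h4
    exact this.congr_deriv (by ring)
  have hmono : MonotoneOn (fun u : ℝ => (2 + u) * Real.log (1 + u) - 2 * u) (Set.Ici 0) := by
    apply monotoneOn_of_deriv_nonneg (convex_Ici 0)
    · apply ContinuousOn.sub
      · apply ContinuousOn.mul
        · exact (continuousOn_const.add continuousOn_id)
        · apply ContinuousOn.log (continuousOn_const.add continuousOn_id)
          intro x hx
          have hx0 : (0:ℝ) ≤ x := hx
          show (1:ℝ) + x ≠ 0
          positivity
      · exact continuousOn_const.mul continuousOn_id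
    · intro x hx
      rw [interior_Ici] at hx
      exact (hderiv x hx).differentiableAt.differentiableWithinAt
    · intro x hx
      rw [interior_Ici] at hx
      rw [(hderiv x hx).deriv]
      have hx' : 0 < x := hx
      have h1x : (0:ℝ) < 1 + x := by linarith
      have hlb := Real.one_sub_inv_le_log_of_pos h1x
      have e : (2 + x) * (1 / (1 + x)) = 1 + (1 + x)⁻¹ := by
        field_simp
        ring
      rw [e]
      linarith
  have h0 : (0:ℝ) ∈ Set.Ici (0:ℝ) := Set.self_mem_Ici
  have htmem : t ∈ Set.Ici (0:ℝ) := ht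
  have := hmono h0 htmem ht
  simp only [add_zero, Real.log_one, mul_zero, sub_zero, mul_zero, sub_zero] at this
  linarith

/-- The Chernoff exponent bound: `t - (1+t) log(1+t) ≤ -min(t,t²)/3` for `t > 0`. -/
lemma chernoff_exponent_bound {t : ℝ} (ht : 0 < t) :
    t - (1 + t) * Real.log (1 + t) ≤ -(min t (t ^ 2)) / 3 := by
  have h1 := two_mul_le_log_aux t ht.le
  have h2t : (0:ℝ) < 2 + t := by linarith
  have hlog : 2 * t / (2 + t) ≤ Real.log (1 + t) := by
    rw [div_le_iff₀ h2t] at *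
    linarith
  have key : t - (1 + t) * Real.log (1 + t) ≤ -(t ^ 2 / (2 + t)) := by
    have h2 : (1 + t) * (2 * t / (2 + t)) ≤ (1 + t) * Real.log (1 + t) :=
      mul_le_mul_of_nonneg_left hlog (by linarith)
    have e : t - (1 + t) * (2 * t / (2 + t)) = -(t ^ 2 / (2 + t)) := by
      field_simp
      ring
    linarith
  refine key.trans ?_
  rw [neg_div]
  apply neg_le_neg
  rw [div_le_div_iff₀ (by norm_num) h2t]
  rcases le_total t 1 with h | h
  · rw [min_eq_right (by nlinarith)]
    nlinarith
  · rw [min_eq_left (by nlinarith)]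
    nlinarith

theorem sample_cost_of_optimal_centers_concentration
    {V : Type*} [MetricSpace V] [Fintype V]
    (M : ℝ) (hdiam : ∀ u v : V, dist u v ≤ M)
    (D : Finset V) (hD : D.Nonempty)
    (k : ℕ) (hk : 1 ≤ k)
    (COPT : Finset V) (hCcard : COPT.card = k)
    (hopt : costMedAvg D COPT = medAvg V D k)
    (s : ℕ) (α β : ℝ) (hα : 1 ≤ α) (hβ : 0 < β) :
    samplePr D s (fun f => (1 + β / α) * medAvg V D k < sampleCostMed f COPT) ≤
      Real.exp (-((s : ℝ) / (3 * M)) * medAvg V D k * min (β / α) ((β / α) ^ 2)) := by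
  classical
  have hα0 : (0:ℝ) < α := lt_of_lt_of_le one_pos hα
  set t : ℝ := β / α with htdef
  have ht : 0 < t := div_pos hβ hα0
  rw [← hopt]
  set μ : ℝ := costMedAvg D COPT with hμdef
  -- basic facts
  have hCne : (COPT : Set V).Nonempty := by
    have h : COPT.Nonempty := Finset.card_pos.mp (by rw [hCcard]; omega)
    exact Finset.coe_nonempty.mpr h
  have ha0 : ∀ x : V, 0 ≤ Metric.infDist x (COPT : Set V) := fun x => Metric.infDist_nonneg
  have haM : ∀ x : V, Metric.infDist x (COPT : Set V) ≤ M := by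
    intro x
    obtain ⟨c, hc⟩ := hCne
    exact (Metric.infDist_le_dist_of_mem hc).trans (hdiam x c)
  have hN : (0:ℝ) < (D.card : ℝ) := by exact_mod_cast Finset.card_pos.mpr hD
  have hμ0 : 0 ≤ μ := by
    rw [hμdef, costMedAvg]
    exact div_nonneg (Finset.sum_nonneg fun x _ => ha0 x) hN.le
  have hμM : μ ≤ M := by
    rw [hμdef, costMedAvg, div_le_iff₀ hN]
    calc ∑ v ∈ D, Metric.infDist v (COPT : Set V) ≤ ∑ _v ∈ D, M :=
          Finset.sum_le_sum fun x _ => haM x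
      _ = M * (D.card : ℝ) := by rw [Finset.sum_const, nsmul_eq_mul]; ring
  have hempty : ∀ P : (Fin s → {x // x ∈ D}) → Prop, (∀ f, ¬ P f) → samplePr D s P = 0 := by
    intro P hP
    have : IsEmpty {f : Fin s → {x // x ∈ D} // P f} := ⟨fun g => hP g.1 g.2⟩
    rw [samplePr, Nat.card_of_isEmpty]
    simp
  rcases eq_or_lt_of_le hμ0 with hμz | hμpos
  · -- degenerate case μ = 0
    rw [hempty _ ?_]
    · positivity
    · intro f hf
      have hsum0 : ∑ x ∈ D, Metric.infDist x (COPT : Set V) = 0 := by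
        have : μ * (D.card : ℝ) = ∑ x ∈ D, Metric.infDist x (COPT : Set V) := by
          rw [hμdef, costMedAvg]; field_simp
        rw [← this, ← hμz]; ring
      have hz : ∀ x ∈ D, Metric.infDist x (COPT : Set V) = 0 :=
        (Finset.sum_eq_zero_iff_of_nonneg fun x _ => ha0 x).mp hsum0
      have hsc : sampleCostMed f COPT = 0 := by
        rw [sampleCostMed]
        rw [Finset.sum_eq_zero fun i _ => hz _ (f i).2]
        simp
      rw [hsc, ← hμz] at hf
      simp only [mul_zero, lt_self_iff_false] at hf
  rcases Nat.eq_zero_or_pos s with hs0 | hs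
  · -- degenerate case s = 0
    subst hs0
    rw [hempty _ ?_]
    · positivity
    · intro f hf
      have hsc : sampleCostMed f COPT = 0 := by
        rw [sampleCostMed]; simp
      rw [hsc] at hf
      nlinarith
  -- main case
  have hM : 0 < M := lt_of_lt_of_le hμpos hμM
  set L : ℝ := Real.log (1 + t) with hLdef
  have hL : 0 < L := Real.log_pos (by linarith)
  set lam : ℝ := L / M with hlamdef
  have hlam : 0 < lam := div_pos hL hM
  have hs' : (0:ℝ) < (s : ℝ) := by exact_mod_cast hs
  -- pointwise mgf bound
  have hpt : ∀ x : {x // x ∈ D},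
      Real.exp (lam * Metric.infDist (x : V) (COPT : Set V)) ≤
        1 + Metric.infDist (x : V) (COPT : Set V) / M * t := by
    intro x
    set a : ℝ := Metric.infDist (x : V) (COPT : Set V) with hadef
    have ha0' : 0 ≤ a := ha0 x
    have haM' : a ≤ M := haM x
    have hθ : 0 ≤ a / M := div_nonneg ha0' hM.le
    have hθ1 : a / M ≤ 1 := (div_le_one hM).mpr haM'
    have hcvx := convexOn_exp.2 (Set.mem_univ (0:ℝ)) (Set.mem_univ L)
      (by linarith : (0:ℝ) ≤ 1 - a / M) hθ (by ring)
    have e1 : (1 - a / M) • (0:ℝ) + (a / M) • L = lam * a := by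
      simp only [smul_eq_mul, mul_zero, zero_add, hlamdef]
      ring
    have e2 : Real.exp L = 1 + t := Real.exp_log (by linarith)
    rw [e1] at hcvx
    calc Real.exp (lam * a) ≤ (1 - a / M) • Real.exp 0 + (a / M) • Real.exp L := hcvx
      _ = 1 + a / M * t := by
          simp only [smul_eq_mul, Real.exp_zero, e2]; ring
  -- sum of mgfs
  have hsum_a : ∑ x : {x // x ∈ D}, Metric.infDist (x : V) (COPT : Set V) = μ * (D.card : ℝ) := by
    rw [Finset.sum_coe_sort D (fun x => Metric.infDist x (COPT : Set V)), hμdef, costMedAvg]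
    field_simp
  have hsumexp : ∑ x : {x // x ∈ D}, Real.exp (lam * Metric.infDist (x : V) (COPT : Set V)) ≤
      (D.card : ℝ) * Real.exp (μ * t / M) := by
    calc ∑ x : {x // x ∈ D}, Real.exp (lam * Metric.infDist (x : V) (COPT : Set V))
        ≤ ∑ x : {x // x ∈ D}, (1 + Metric.infDist (x : V) (COPT : Set V) / M * t) :=
          Finset.sum_le_sum fun x _ => hpt x
      _ = (D.card : ℝ) * (1 + μ * t / M) := by
          rw [Finset.sum_add_distrib]
          simp only [Finset.sum_const, Finset.card_univ, Fintype.card_coe, nsmul_eq_mul, mul_one]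
          rw [show (fun x : {x // x ∈ D} => Metric.infDist (x : V) (COPT : Set V) / M * t)
              = fun x : {x // x ∈ D} => Metric.infDist (x : V) (COPT : Set V) * (t / M) from
              funext fun x => by ring]
          rw [← Finset.sum_mul, hsum_a]
          ring
      _ ≤ (D.card : ℝ) * Real.exp (μ * t / M) := by
          apply mul_le_mul_of_nonneg_left _ hN.le
          have := Real.add_one_le_exp (μ * t / M)
          linarith
  -- counting via Chernoff
  set P : (Fin s → {x // x ∈ D}) → Prop :=
    fun f => (1 + t) * μ < sampleCostMed f COPT with hPdef
  have hcard : (Nat.card {f : Fin s → {x // x ∈ D} // P f} : ℝ)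
      = ((Finset.univ.filter P).card : ℝ) := by
    rw [Nat.card_eq_fintype_card, Fintype.card_subtype]
  have key : ((Finset.univ.filter P).card : ℝ) ≤
      ((D.card : ℝ) * Real.exp (μ * t / M)) ^ s
        * Real.exp (-(lam * ((s : ℝ) * ((1 + t) * μ)))) := by
    have step1 : ((Finset.univ.filter P).card : ℝ) ≤
        ∑ f ∈ Finset.univ.filter P,
          Real.exp (lam * (∑ i, Metric.infDist (f i : V) (COPT : Set V))
            - lam * ((s : ℝ) * ((1 + t) * μ))) := by
      rw [Finset.card_eq_sum_ones]
      push_cast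
      apply Finset.sum_le_sum
      intro f hf
      have hPf : P f := (Finset.mem_filter.mp hf).2
      have hineq : (s : ℝ) * ((1 + t) * μ) ≤ ∑ i, Metric.infDist (f i : V) (COPT : Set V) := by
        have h2 : (1 + t) * μ < (∑ i, Metric.infDist (f i : V) (COPT : Set V)) / (s : ℝ) := hPf
        rw [lt_div_iff₀ hs'] at h2
        nlinarith
      have h0 : 0 ≤ lam * (∑ i, Metric.infDist (f i : V) (COPT : Set V))
          - lam * ((s : ℝ) * ((1 + t) * μ)) := by
        have := mul_le_mul_of_nonneg_left hineq hlam.le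
        linarith
      calc (1:ℝ) = Real.exp 0 := (Real.exp_zero).symm
        _ ≤ _ := Real.exp_le_exp.mpr h0
    have step2 : ∑ f ∈ Finset.univ.filter P,
          Real.exp (lam * (∑ i, Metric.infDist (f i : V) (COPT : Set V))
            - lam * ((s : ℝ) * ((1 + t) * μ))) ≤
        ∑ f : Fin s → {x // x ∈ D},
          Real.exp (lam * (∑ i, Metric.infDist (f i : V) (COPT : Set V))
            - lam * ((s : ℝ) * ((1 + t) * μ))) :=
      Finset.sum_le_sum_of_subset_of_nonneg (Finset.filter_subset _ _)
        fun _ _ _ => (Real.exp_pos _).le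
    have step3 : ∑ f : Fin s → {x // x ∈ D},
        Real.exp (lam * (∑ i, Metric.infDist (f i : V) (COPT : Set V))
          - lam * ((s : ℝ) * ((1 + t) * μ)))
        = (∑ x : {x // x ∈ D}, Real.exp (lam * Metric.infDist (x : V) (COPT : Set V))) ^ s
          * Real.exp (-(lam * ((s : ℝ) * ((1 + t) * μ)))) := by
      rw [Fintype.sum_pow (fun x : {x // x ∈ D} =>
        Real.exp (lam * Metric.infDist (x : V) (COPT : Set V))) s]
      rw [Finset.sum_mul]
      apply Finset.sum_congr rfl
      intro f _
      rw [← Real.exp_sum, ← Real.exp_add, sub_eq_add_neg, Finset.mul_sum]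
    calc ((Finset.univ.filter P).card : ℝ) ≤ _ := step1
      _ ≤ _ := step2
      _ = _ := step3
      _ ≤ ((D.card : ℝ) * Real.exp (μ * t / M)) ^ s
            * Real.exp (-(lam * ((s : ℝ) * ((1 + t) * μ)))) := by
          apply mul_le_mul_of_nonneg_right _ (Real.exp_pos _).le
          exact pow_le_pow_left₀ (Finset.sum_nonneg fun x _ => (Real.exp_pos _).le) hsumexp s
  -- put it together
  show samplePr D s P ≤ Real.exp (-((s : ℝ) / (3 * M)) * μ * min t (t ^ 2))
  rw [samplePr, hcard]
  have hNs : (0:ℝ) < (D.card : ℝ) ^ s := by positivity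
  rw [div_le_iff₀ hNs]
  calc ((Finset.univ.filter P).card : ℝ) ≤
      ((D.card : ℝ) * Real.exp (μ * t / M)) ^ s
        * Real.exp (-(lam * ((s : ℝ) * ((1 + t) * μ)))) := key
    _ = Real.exp ((s : ℝ) * μ / M * (t - (1 + t) * L)) * (D.card : ℝ) ^ s := by
        rw [mul_pow, ← Real.exp_nat_mul, mul_assoc, ← Real.exp_add, mul_comm]
        congr 1
        rw [hlamdef]
        field_simp
        ring
    _ ≤ Real.exp (-((s : ℝ) / (3 * M)) * μ * min t (t ^ 2)) * (D.card : ℝ) ^ s := by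
        apply mul_le_mul_of_nonneg_right _ hNs.le
        apply Real.exp_le_exp.mpr
        have hc := chernoff_exponent_bound ht
        have hsμ : 0 ≤ (s : ℝ) * μ / M := by positivity
        have h2 := mul_le_mul_of_nonneg_left hc hsμ
        calc (s : ℝ) * μ / M * (t - (1 + t) * L) ≤ (s : ℝ) * μ / M * (-(min t (t ^ 2)) / 3) := h2
          _ = -((s : ℝ) / (3 * M)) * μ * min t (t ^ 2) := by ring
end

section
/- Let (V,d) be a finite metric space with diameter at most M, D ⊆ V nonempty, k ≥ 1, α ≥ 1, β > 0, γ ≥ 0, 0 < θ < 1, and assume med_avg(D,k) > 0. Let S = (X_1,…,X_s) be s independent uniform samples from D with s ≥ 3·M·α·(β + α)·ln(1/θ) / (β²·med_avg(D,k)). Let C* be a random subset of V with |C*| = k, measurable as a function of S, such that almost surely cost^med_avg(S, C*) ≤ α·min_{C ⊆ V, |C| = k} cost^med_avg(S, C) + γ (i.e. C* is the output of an (α,γ)-approximation k-median algorithm run on S). Then Pr[ cost^med_avg(S, C*) ≤ (α + β)·med_avg(D,k) + γ ] ≥ 1 − θ. -/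
open Finset

lemma log_key {x : ℝ} (hx : 0 ≤ x) :
    x ^ 2 / (3 * (1 + x)) ≤ (1 + x) * Real.log (1 + x) - x := by
  set q : ℝ := (1 + x) ^ ((1:ℝ)/4) with hq
  have h1x : (1:ℝ) ≤ 1 + x := by linarith
  have hq1 : 1 ≤ q := Real.one_le_rpow h1x (by norm_num)
  have hq0 : 0 < q := by linarith
  have hq4 : q ^ (4:ℕ) = 1 + x := by
    rw [hq, ← Real.rpow_natCast ((1+x) ^ ((1:ℝ)/4)) 4, ← Real.rpow_mul (by linarith)]
    norm_num
  have hlog : Real.log (1 + x) = 4 * Real.log q := by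
    rw [← hq4, Real.log_pow]; push_cast; ring
  have hlq : 1 - 1/q ≤ Real.log q := by
    have := Real.log_le_sub_one_of_pos (show (0:ℝ) < 1/q by positivity)
    rw [Real.log_div one_ne_zero (ne_of_gt hq0), Real.log_one] at this
    linarith
  have hql : q - 1 ≤ q * Real.log q := by
    have := mul_le_mul_of_nonneg_left hlq (le_of_lt hq0)
    calc q - 1 = q * (1 - 1/q) := by field_simp
    _ ≤ q * Real.log q := this
  have hx4 : x = q ^ (4:ℕ) - 1 := by rw [hq4]; ring
  rw [div_le_iff₀ (by positivity), hlog, hx4]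
  nlinarith [mul_le_mul_of_nonneg_left hql (show (0:ℝ) ≤ 12 * q^7 by positivity),
    mul_nonneg (mul_nonneg (sq_nonneg (q-1)) (pow_nonneg hq0.le 6)) (sub_nonneg.2 hq1),
    mul_nonneg (sq_nonneg (q-1)) (pow_nonneg hq0.le 6),
    mul_nonneg (sq_nonneg (q-1)) (pow_nonneg hq0.le 5),
    mul_nonneg (sq_nonneg (q-1)) (pow_nonneg hq0.le 4),
    mul_nonneg (sq_nonneg (q-1)) (pow_nonneg hq0.le 3),
    mul_nonneg (sq_nonneg (q-1)) (pow_nonneg hq0.le 2),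
    sq_nonneg (q-1), one_le_pow₀ hq1 (n := 3), hq0]

lemma exp_seg {M t y : ℝ} (hM : 0 < M) (hy0 : 0 ≤ y) (hyM : y ≤ M) :
    Real.exp (t * y) ≤ 1 + y * (Real.exp (t * M) - 1) / M := by
  have hl0 : 0 ≤ y / M := by positivity
  have hl1 : y / M ≤ 1 := by rw [div_le_one hM]; exact hyM
  have hc := convexOn_exp.2 (Set.mem_univ (t * M)) (Set.mem_univ 0)
    (show (0:ℝ) ≤ y/M from hl0) (show (0:ℝ) ≤ 1 - y/M by linarith)
    (show y/M + (1 - y/M) = 1 by ring)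
  have he : (y/M) • (t*M) + (1 - y/M) • (0:ℝ) = t * y := by
    have hM' : M ≠ 0 := hM.ne'
    simp only [smul_eq_mul, mul_zero, add_zero]
    rw [div_mul_eq_mul_div, div_eq_iff hM']; ring
  rw [he] at hc
  simp only [smul_eq_mul, Real.exp_zero] at hc
  calc Real.exp (t*y) ≤ y/M * Real.exp (t*M) + (1 - y/M) * 1 := hc
  _ = 1 + y * (Real.exp (t*M) - 1) / M := by field_simp; ring

set_option maxHeartbeats 1000000 in
theorem approx_algorithm_on_sample_is_good
    {V : Type*} [MetricSpace V] [Fintype V]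
    (M : ℝ) (hdiam : ∀ u v : V, dist u v ≤ M)
    (D : Finset V) (hD : D.Nonempty)
    (k : ℕ) (hk : 1 ≤ k)
    (α β γ θ : ℝ) (hα : 1 ≤ α) (hβ : 0 < β) (hγ : 0 ≤ γ)
    (hθ0 : 0 < θ) (hθ1 : θ < 1)
    (hpos : 0 < medAvg V D k)
    (s : ℕ)
    (hs : (s : ℝ) ≥ 3 * M * α * (β + α) * Real.log (1 / θ) / (β ^ 2 * medAvg V D k))
    (Cstar : (Fin s → {x // x ∈ D}) → Finset V)
    (hCcard : ∀ f, (Cstar f).card = k)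
    (happrox : ∀ f, sampleCostMed f (Cstar f) ≤
      α * sInf {y : ℝ | ∃ C : Finset V, C.card = k ∧ y = sampleCostMed f C} + γ) :
    samplePr D s (fun f => sampleCostMed f (Cstar f) ≤ (α + β) * medAvg V D k + γ) ≥
      1 - θ := by
  classical
  set m := medAvg V D k with hm_def
  set A : Set ℝ := {y : ℝ | ∃ C : Finset V, C.card = k ∧
    y = ∑ x ∈ D, Metric.infDist x (C : Set V)} with hA
  have hDcard : 0 < D.card := Finset.card_pos.2 hD
  have hDcardR : (0:ℝ) < (D.card : ℝ) := by exact_mod_cast hDcard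
  have hAne : A.Nonempty := by
    by_contra h
    rw [Set.not_nonempty_iff_eq_empty] at h
    have : m = 0 := by
      rw [hm_def, medAvg, ← hA, h, Real.sInf_empty, zero_div]
    exact absurd this (ne_of_gt hpos)
  have hAfin : A.Finite := by
    have : A ⊆ Set.range (fun C : Finset V => ∑ x ∈ D, Metric.infDist x (C : Set V)) := by
      rintro y ⟨C, _, rfl⟩; exact ⟨C, rfl⟩
    exact (Set.finite_range _).subset this
  obtain ⟨Copt, hCopt_card, hCopt_sum⟩ := hAne.csInf_mem hAfin
  set g : V → ℝ := fun x => Metric.infDist x (Copt : Set V) with hg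
  have hmS : m = (∑ x ∈ D, g x) / D.card := by
    rw [hm_def, medAvg, ← hA, hCopt_sum]
  have hsumg : ∑ x ∈ D, g x = D.card * m := by
    rw [hmS]; field_simp
  have hCopt_ne : (Copt : Set V).Nonempty := by
    have : Copt.Nonempty := Finset.card_pos.1 (by omega)
    exact ⟨this.choose, this.choose_spec⟩
  have hg0 : ∀ x, 0 ≤ g x := fun x => Metric.infDist_nonneg
  have hgM : ∀ x, g x ≤ M := by
    intro x
    obtain ⟨c, hc⟩ := hCopt_ne
    exact le_trans (Metric.infDist_le_dist_of_mem hc) (hdiam x c)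
  have hM : 0 < M := by
    by_contra h
    push_neg at h
    have hz : ∀ x ∈ D, g x = 0 := fun x _ => le_antisymm (le_trans (hgM x) h) (hg0 x)
    have : (0:ℝ) = D.card * m := by rw [← hsumg, Finset.sum_congr rfl hz]; simp
    nlinarith
  set δ : ℝ := β / α with hδ_def
  have hα0 : (0:ℝ) < α := by linarith
  have hδ : 0 < δ := div_pos hβ hα0
  have hαδ : α * δ = β := by rw [hδ_def]; field_simp
  set L : ℝ := Real.log (1 / θ) with hL_def
  have hL : 0 < L := by
    rw [hL_def]
    apply Real.log_pos
    rw [lt_div_iff₀ hθ0]; linarith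
  have hs_pos : 0 < s := by
    rcases Nat.eq_zero_or_pos s with h | h
    · exfalso
      have hpos' : (0:ℝ) < 3 * M * α * (β + α) * L / (β ^ 2 * m) := by positivity
      rw [h] at hs; push_cast at hs; linarith
    · exact h
  have hsR : (0:ℝ) < (s:ℝ) := by exact_mod_cast hs_pos
  set P : (Fin s → {x // x ∈ D}) → Prop :=
    fun f => sampleCostMed f (Cstar f) ≤ (α + β) * m + γ with hP
  set P' : (Fin s → {x // x ∈ D}) → Prop :=
    fun f => (∑ i, g (f i : V)) ≤ (s:ℝ) * ((1 + δ) * m) with hP'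
  have hP'P : ∀ f, P' f → P f := by
    intro f hf
    have h1 : sampleCostMed f Copt ≤ (1 + δ) * m := by
      rw [sampleCostMed, div_le_iff₀ hsR]
      calc (∑ i, Metric.infDist (f i : V) (Copt : Set V)) = ∑ i, g (f i : V) := rfl
      _ ≤ (s:ℝ) * ((1 + δ) * m) := hf
      _ = (1 + δ) * m * s := by ring
    have h2 : sInf {y : ℝ | ∃ C : Finset V, C.card = k ∧ y = sampleCostMed f C}
        ≤ sampleCostMed f Copt := by
      apply csInf_le
      · refine ⟨0, ?_⟩
        rintro y ⟨C, _, rfl⟩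
        rw [sampleCostMed]
        apply div_nonneg _ (le_of_lt hsR)
        exact Finset.sum_nonneg fun i _ => Metric.infDist_nonneg
      · exact ⟨Copt, hCopt_card, rfl⟩
    calc sampleCostMed f (Cstar f)
        ≤ α * sInf {y : ℝ | ∃ C : Finset V, C.card = k ∧ y = sampleCostMed f C} + γ :=
          happrox f
      _ ≤ α * ((1 + δ) * m) + γ := by
          have := le_trans h2 h1
          nlinarith
      _ = (α + β) * m + γ := by rw [← hαδ]; ring
  have hcardF : Fintype.card (Fin s → {x // x ∈ D}) = D.card ^ s := by
    rw [Fintype.card_fun, Fintype.card_coe, Fintype.card_fin]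
  set N : ℕ := (Finset.univ.filter (fun f : Fin s → {x // x ∈ D} => ¬ P' f)).card with hN
  set t : ℝ := Real.log (1 + δ) / M with ht_def
  have ht : 0 < t := div_pos (Real.log_pos (by linarith)) hM
  have htM : Real.exp (t * M) = 1 + δ := by
    rw [ht_def, div_mul_cancel₀ _ (ne_of_gt hM), Real.exp_log (by linarith)]
  set E : ℝ := Real.exp (t * ((s:ℝ) * ((1 + δ) * m))) with hE_def
  have key1 : (N:ℝ) * E
      ≤ ∑ f : Fin s → {x // x ∈ D}, ∏ i, Real.exp (t * g (f i : V)) := by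
    have hstep : ∀ f ∈ Finset.univ.filter (fun f : Fin s → {x // x ∈ D} => ¬ P' f),
        E ≤ ∏ i, Real.exp (t * g (f i : V)) := by
      intro f hf
      rw [Finset.mem_filter] at hf
      have hgt : (s:ℝ) * ((1 + δ) * m) < ∑ i, g (f i : V) := by
        have := hf.2; rw [hP'] at this; exact not_le.mp this
      have : ∏ i, Real.exp (t * g (f i : V)) = Real.exp (∑ i, t * g (f i : V)) :=
        (Real.exp_sum _ _).symm
      rw [this, hE_def]
      apply Real.exp_le_exp.2
      rw [← Finset.mul_sum]
      exact mul_le_mul_of_nonneg_left hgt.le ht.le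
    have h := Finset.card_nsmul_le_sum _ _ _ hstep
    rw [← hN, nsmul_eq_mul] at h
    refine h.trans ?_
    apply Finset.sum_le_sum_of_subset_of_nonneg (Finset.filter_subset _ _)
    intro f _ _
    exact Finset.prod_nonneg (fun i _ => (Real.exp_pos _).le)
  have key2 : ∑ f : Fin s → {x // x ∈ D}, ∏ i, Real.exp (t * g (f i : V))
      = (∑ x : {x // x ∈ D}, Real.exp (t * g (x : V))) ^ s := by
    have h := Finset.prod_univ_sum (fun _ : Fin s => (Finset.univ : Finset {x // x ∈ D}))
      (fun _ x => Real.exp (t * g (x : V)))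
    rw [Fintype.piFinset_univ] at h
    rw [← h, Finset.prod_const, Finset.card_univ, Fintype.card_fin]
  have key3 : ∑ x : {x // x ∈ D}, Real.exp (t * g (x : V))
      ≤ (D.card : ℝ) * (1 + δ * m / M) := by
    have hb : ∀ x : {x // x ∈ D}, Real.exp (t * g (x : V)) ≤ 1 + g (x : V) * δ / M := by
      intro x
      have := exp_seg (t := t) hM (hg0 (x : V)) (hgM (x : V))
      rwa [htM, show (1 + δ - 1) = δ by ring] at this
    have hcoe : ∑ x : {x // x ∈ D}, g (x : V) = ∑ x ∈ D, g x := Finset.sum_coe_sort D g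
    calc ∑ x : {x // x ∈ D}, Real.exp (t * g (x : V))
        ≤ ∑ x : {x // x ∈ D}, (1 + g (x : V) * δ / M) := Finset.sum_le_sum (fun x _ => hb x)
      _ = ∑ x : {x // x ∈ D}, (1:ℝ) + ∑ x : {x // x ∈ D}, g (x : V) * δ / M :=
          Finset.sum_add_distrib
      _ = (D.card : ℝ) + (∑ x : {x // x ∈ D}, g (x : V)) * δ / M := by
          rw [Finset.sum_const, Finset.card_univ, Fintype.card_coe, nsmul_eq_mul, mul_one,
            ← Finset.sum_div, ← Finset.sum_mul]
      _ = (D.card : ℝ) * (1 + δ * m / M) := by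
          rw [hcoe, hsumg]
          ring
  have hsum_nonneg : (0:ℝ) ≤ ∑ x : {x // x ∈ D}, Real.exp (t * g (x : V)) :=
    Finset.sum_nonneg (fun x _ => (Real.exp_pos _).le)
  have hbase : (0:ℝ) ≤ 1 + δ * m / M := by positivity
  have key4 : ((D.card : ℝ) * (1 + δ * m / M)) ^ s
      ≤ (D.card : ℝ) ^ s * Real.exp ((s:ℝ) * (δ * m / M)) := by
    rw [mul_pow]
    apply mul_le_mul_of_nonneg_left _ (pow_nonneg hDcardR.le s)
    calc (1 + δ * m / M) ^ s ≤ Real.exp (δ * m / M) ^ s := by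
          apply pow_le_pow_left₀ hbase
          linarith [Real.add_one_le_exp (δ * m / M)]
      _ = Real.exp ((s:ℝ) * (δ * m / M)) := by
          rw [← Real.exp_nat_mul]
  have chain : (N:ℝ) * E ≤ (D.card : ℝ) ^ s * Real.exp ((s:ℝ) * (δ * m / M)) := by
    refine key1.trans ?_
    rw [key2]
    exact (pow_le_pow_left₀ hsum_nonneg key3 s).trans key4
  -- exponent comparison
  have hsmM : 3 * (1 + δ) / δ ^ 2 * L ≤ (s:ℝ) * m / M := by
    have h1 : 3 * M * α * (β + α) * L / (β ^ 2 * m) ≤ (s:ℝ) := hs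
    have h2 : 3 * (1 + δ) / δ ^ 2 = 3 * α * (β + α) / β ^ 2 := by
      rw [hδ_def]; field_simp; ring
    rw [h2, div_mul_eq_mul_div, div_le_div_iff₀ (by positivity) hM]
    rw [div_le_iff₀ (by positivity)] at h1
    ring_nf at h1 ⊢
    linarith
  have hlogkey : δ ^ 2 / (3 * (1 + δ)) ≤ (1 + δ) * Real.log (1 + δ) - δ := log_key hδ.le
  have hLle : L ≤ (s:ℝ) * m / M * ((1 + δ) * Real.log (1 + δ) - δ) := by
    have hKL : 0 ≤ 3 * (1 + δ) / δ ^ 2 * L := by positivity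
    have h := mul_le_mul hsmM hlogkey (by positivity) (le_trans hKL hsmM)
    calc L = 3 * (1 + δ) / δ ^ 2 * L * (δ ^ 2 / (3 * (1 + δ))) := by
          field_simp
      _ ≤ (s:ℝ) * m / M * ((1 + δ) * Real.log (1 + δ) - δ) := h
  have hexp_le : Real.exp ((s:ℝ) * (δ * m / M)) ≤ θ * E := by
    have hid : (s:ℝ) * (δ * m / M) =
        (t * ((s:ℝ) * ((1 + δ) * m))) - ((s:ℝ) * m / M * ((1 + δ) * Real.log (1 + δ) - δ)) := by
      rw [ht_def]; field_simp; ring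
    have hmono : (s:ℝ) * (δ * m / M) ≤ Real.log θ + t * ((s:ℝ) * ((1 + δ) * m)) := by
      have hlogθ : Real.log θ = -L := by
        rw [hL_def, one_div, Real.log_inv, neg_neg]
      rw [hid, hlogθ]
      linarith
    calc Real.exp ((s:ℝ) * (δ * m / M))
        ≤ Real.exp (Real.log θ + t * ((s:ℝ) * ((1 + δ) * m))) := Real.exp_le_exp.2 hmono
      _ = θ * E := by rw [Real.exp_add, Real.exp_log hθ0, hE_def]
  have hNb : (N:ℝ) ≤ θ * (D.card : ℝ) ^ s := by
    have hE : 0 < E := Real.exp_pos _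
    rw [← mul_le_mul_iff_of_pos_right hE]
    refine chain.trans ?_
    calc (D.card : ℝ) ^ s * Real.exp ((s:ℝ) * (δ * m / M))
        ≤ (D.card : ℝ) ^ s * (θ * E) :=
          mul_le_mul_of_nonneg_left hexp_le (pow_nonneg hDcardR.le s)
      _ = θ * (D.card : ℝ) ^ s * E := by ring
  -- finish
  have hcards : (Finset.univ.filter P).card + (Finset.univ.filter (fun f => ¬ P f)).card
      = D.card ^ s := by
    rw [Finset.card_filter_add_card_filter_not, Finset.card_univ, hcardF]
  have hmono2 : (Finset.univ.filter (fun f : Fin s → {x // x ∈ D} => ¬ P f)).card ≤ N := by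
    apply Finset.card_le_card
    intro f hf
    rw [Finset.mem_filter] at hf ⊢
    exact ⟨hf.1, fun h => hf.2 (hP'P f h)⟩
  have hcardP : (Nat.card {f : Fin s → {x // x ∈ D} // P f} : ℝ)
      = ((Finset.univ.filter P).card : ℝ) := by
    rw [Nat.card_eq_fintype_card, Fintype.card_subtype]
  rw [samplePr, hcardP, ge_iff_le, le_div_iff₀ (pow_pos hDcardR s)]
  have hc1 : ((Finset.univ.filter P).card : ℝ)
      + ((Finset.univ.filter (fun f => ¬ P f)).card : ℝ) = (D.card : ℝ) ^ s := by
    exact_mod_cast congrArg (fun n : ℕ => (n:ℝ)) hcards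
  have hc2 : ((Finset.univ.filter (fun f => ¬ P f)).card : ℝ) ≤ (N:ℝ) := by
    exact_mod_cast hmono2
  nlinarith
end

section
/- Let (V,d) be a finite metric space with diameter at most M, D ⊆ V nonempty, k ≥ 1, α ≥ 1, β > 0, γ ≥ 0, and let S = (X_1,…,X_s) be s independent uniform samples from D. Let C_b ⊆ V with |C_b| = k be any fixed (α + 3β, γ)-bad solution for the k-median problem on D, i.e. cost^med_avg(D, C_b) > (α + 3β)·med_avg(D,k) + γ. Then Pr[ cost^med_avg(S, C_b) ≤ (α + β)·med_avg(D,k) + γ ] ≤ exp( −2·s·β²·(med_avg(D,k))² / M² ). -/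
open Finset

lemma exp_le_quadratic {u : ℝ} (hu : u ≤ 0) : Real.exp u ≤ 1 + u + u ^ 2 / 2 := by
  have hanti : Antitone (fun x : ℝ => 1 + x + x ^ 2 / 2 - Real.exp x) := by
    apply antitone_of_deriv_nonpos
    · fun_prop
    · intro x
      have h1 : HasDerivAt (fun x : ℝ => 1 + x + x ^ 2 / 2 - Real.exp x)
          (0 + 1 + (2 * x ^ 1 / 2) - Real.exp x) x :=
        (((hasDerivAt_const x (1:ℝ)).add (hasDerivAt_id x)).add
          ((hasDerivAt_pow 2 x).div_const 2)).sub (Real.hasDerivAt_exp x)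
      rw [h1.deriv]
      have := Real.add_one_le_exp x
      simp only [pow_one]
      nlinarith
  have h2 := hanti hu
  simp only [one_pow, Real.exp_zero] at h2
  norm_num at h2
  linarith

lemma samplePr_le_one {V : Type*} (D : Finset V) (hD : D.Nonempty) (s : ℕ)
    (P : (Fin s → {x // x ∈ D}) → Prop) : samplePr D s P ≤ 1 := by
  classical
  have hN : 0 < (D.card : ℝ) := by exact_mod_cast hD.card_pos
  rw [samplePr, div_le_one (by positivity)]
  have h1 : Nat.card {f : Fin s → {x // x ∈ D} // P f}
      ≤ Nat.card (Fin s → {x // x ∈ D}) :=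
    Nat.card_le_card_of_injective _ Subtype.val_injective
  have h2 : Nat.card (Fin s → {x // x ∈ D}) = D.card ^ s := by
    rw [Nat.card_eq_fintype_card, Fintype.card_fun]
    simp
  calc (Nat.card {f : Fin s → {x // x ∈ D} // P f} : ℝ)
      ≤ (Nat.card (Fin s → {x // x ∈ D}) : ℝ) := by exact_mod_cast h1
    _ = (D.card : ℝ) ^ s := by rw [h2]; push_cast; ring

theorem bad_solution_stays_bad_on_sample
    {V : Type*} [MetricSpace V] [Fintype V]
    (M : ℝ) (hdiam : ∀ u v : V, dist u v ≤ M)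
    (D : Finset V) (hD : D.Nonempty)
    (k : ℕ) (hk : 1 ≤ k)
    (α β γ : ℝ) (hα : 1 ≤ α) (hβ : 0 < β) (hγ : 0 ≤ γ)
    (s : ℕ)
    (Cb : Finset V) (hCcard : Cb.card = k)
    (hbad : costMedAvg D Cb > (α + 3 * β) * medAvg V D k + γ) :
    samplePr D s (fun f => sampleCostMed f Cb ≤ (α + β) * medAvg V D k + γ) ≤
      Real.exp (-(2 * (s : ℝ) * β ^ 2 * (medAvg V D k) ^ 2) / M ^ 2) := by
  classical
  set m := medAvg V D k with hm_def
  obtain ⟨v0, hv0⟩ := hD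
  have hM0 : 0 ≤ M := le_trans (by simp) (hdiam v0 v0)
  -- nonnegativity of m
  have hm0 : 0 ≤ m := by
    rw [hm_def, medAvg]
    apply div_nonneg _ (Nat.cast_nonneg _)
    apply Real.sInf_nonneg
    rintro y ⟨C, -, rfl⟩
    exact Finset.sum_nonneg fun x _ => Metric.infDist_nonneg
  -- degenerate cases: M = 0 or s = 0 or m = 0
  by_cases hdeg : M = 0 ∨ s = 0 ∨ m = 0
  · have : Real.exp (-(2 * (s : ℝ) * β ^ 2 * m ^ 2) / M ^ 2) = 1 := by
      rcases hdeg with h | h | h <;> simp [h]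
    rw [this]
    exact samplePr_le_one D ⟨v0, hv0⟩ s _
  push_neg at hdeg
  obtain ⟨hM, hs0, hmne⟩ := hdeg
  have hMpos : 0 < M := lt_of_le_of_ne hM0 (Ne.symm hM)
  have hs : 0 < s := Nat.pos_of_ne_zero hs0
  have hspos : 0 < (s : ℝ) := by exact_mod_cast hs
  -- setup
  set τ := {x // x ∈ D}
  set Y : τ → ℝ := fun x => Metric.infDist (x : V) (Cb : Set V) with hY_def
  have hCbne : (Cb : Set V).Nonempty := by
    have : Cb.Nonempty := Finset.card_pos.mp (by omega)
    exact ⟨this.choose, by simpa using this.choose_spec⟩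
  have hY0 : ∀ x, 0 ≤ Y x := fun x => Metric.infDist_nonneg
  have hYM : ∀ x : τ, Y x ≤ M := by
    intro x
    obtain ⟨c, hc⟩ := hCbne
    exact le_trans (Metric.infDist_le_dist_of_mem hc) (hdiam _ c)
  set N := D.card with hN_def
  have hNpos : 0 < N := Finset.card_pos.mpr ⟨v0, hv0⟩
  have hNR : 0 < (N : ℝ) := by exact_mod_cast hNpos
  set μ := costMedAvg D Cb with hμ_def
  have hsumY : ∑ x : τ, Y x = N * μ := by
    have hsc : ∑ x : τ, Y x = ∑ x ∈ D, Metric.infDist x (Cb : Set V) :=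
      Finset.sum_coe_sort D (fun x => Metric.infDist x (Cb : Set V))
    rw [hμ_def, costMedAvg, hsc]
    field_simp
    rw [eq_div_iff (Nat.cast_ne_zero.mpr hNpos.ne')]
  have hcardτ : Fintype.card τ = N := Fintype.card_coe D
  have hμM : μ ≤ M := by
    have h1 : ∑ x : τ, Y x ≤ ∑ _x : τ, M := Finset.sum_le_sum fun x _ => hYM x
    have h2 : ∑ _x : τ, M = N * M := by
      rw [Finset.sum_const, Finset.card_univ, hcardτ, nsmul_eq_mul]
    rw [hsumY, h2] at h1
    exact le_of_mul_le_mul_left (by linarith) hNR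
  have hμ0 : 0 ≤ μ := by
    have h1 : (0:ℝ) ≤ ∑ x : τ, Y x := Finset.sum_nonneg fun x _ => hY0 x
    rw [hsumY] at h1
    nlinarith
  set lam := 2 * β * m / M ^ 2 with hlam_def
  have hlam0 : 0 ≤ lam := by positivity
  set T := (α + β) * m + γ with hT_def
  -- mgf bound
  have hmgf : ∑ x : τ, Real.exp (-lam * Y x)
      ≤ N * Real.exp (-lam * μ + lam ^ 2 * M ^ 2 / 2) := by
    have hpt : ∀ x : τ, Real.exp (-lam * Y x)
        ≤ 1 - Y x / M * (1 - Real.exp (-lam * M)) := by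
      intro x
      have ha : 0 ≤ 1 - Y x / M := by
        have := (div_le_one hMpos).mpr (hYM x)
        linarith
      have hb : 0 ≤ Y x / M := div_nonneg (hY0 x) hM0
      have hconv := convexOn_exp.2 (Set.mem_univ (0:ℝ)) (Set.mem_univ (-lam * M))
        ha hb (by ring)
      have heq : (1 - Y x / M) * 0 + Y x / M * (-lam * M) = -lam * Y x := by
        field_simp
        ring
      simp only [smul_eq_mul] at hconv
      rw [heq] at hconv
      calc Real.exp (-lam * Y x) ≤ (1 - Y x / M) * Real.exp 0 + Y x / M * Real.exp (-lam * M) :=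
            hconv
        _ = 1 - Y x / M * (1 - Real.exp (-lam * M)) := by rw [Real.exp_zero]; ring
    calc ∑ x : τ, Real.exp (-lam * Y x)
        ≤ ∑ x : τ, (1 - Y x / M * (1 - Real.exp (-lam * M))) :=
          Finset.sum_le_sum fun x _ => hpt x
      _ = N * (1 - μ / M * (1 - Real.exp (-lam * M))) := by
          rw [Finset.sum_sub_distrib, Finset.sum_const]
          rw [← Finset.sum_mul, ← Finset.sum_div, hsumY]
          rw [Finset.card_univ, hcardτ]
          field_simp
          ring
      _ ≤ N * Real.exp (-lam * μ + lam ^ 2 * M ^ 2 / 2) := by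
          apply mul_le_mul_of_nonneg_left _ (le_of_lt hNR)
          set p := μ / M with hp_def
          set u := -lam * M with hu_def
          have hp0 : 0 ≤ p := div_nonneg hμ0 hM0
          have hp1 : p ≤ 1 := (div_le_one hMpos).mpr hμM
          have hu0 : u ≤ 0 := by
            rw [hu_def]
            nlinarith
          have hquad := exp_le_quadratic hu0
          have hlin := Real.add_one_le_exp u
          have step1 : 1 - p * (1 - Real.exp u) ≤ Real.exp (p * (Real.exp u - 1)) := by
            have := Real.add_one_le_exp (p * (Real.exp u - 1))
            linarith
          have step2 : p * (Real.exp u - 1) ≤ p * u + u ^ 2 / 2 := by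
            have hge : 0 ≤ Real.exp u - 1 - u := by linarith
            have hA : p * (Real.exp u - 1 - u) ≤ 1 * (Real.exp u - 1 - u) :=
              mul_le_mul_of_nonneg_right hp1 hge
            have hB : Real.exp u - 1 - u ≤ u ^ 2 / 2 := by linarith
            nlinarith
          have step3 : p * u + u ^ 2 / 2 = -lam * μ + lam ^ 2 * M ^ 2 / 2 := by
            rw [hp_def, hu_def]
            field_simp
          calc 1 - p * (1 - Real.exp u) ≤ Real.exp (p * (Real.exp u - 1)) := step1
            _ ≤ Real.exp (p * u + u ^ 2 / 2) := Real.exp_le_exp.mpr step2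
            _ = Real.exp (-lam * μ + lam ^ 2 * M ^ 2 / 2) := by rw [step3]
  -- Chernoff
  set P : (Fin s → τ) → Prop := fun f => sampleCostMed f Cb ≤ T with hP_def
  set E := Finset.univ.filter P with hE_def
  have hcard : (Nat.card {f : Fin s → τ // P f} : ℝ) = E.card := by
    rw [Nat.card_eq_fintype_card, Fintype.card_subtype]
  have hchern : (E.card : ℝ)
      ≤ Real.exp (lam * (s * T)) * (∑ x : τ, Real.exp (-lam * Y x)) ^ s := by
    calc (E.card : ℝ) = ∑ _f ∈ E, (1:ℝ) := by simp
      _ ≤ ∑ f ∈ E, Real.exp (lam * (s * T - ∑ i, Y (f i))) := by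
          apply Finset.sum_le_sum
          intro f hf
          rw [hE_def, Finset.mem_filter] at hf
          have hPf : sampleCostMed f Cb ≤ T := hf.2
          rw [sampleCostMed, div_le_iff₀ hspos] at hPf
          have : 0 ≤ lam * (s * T - ∑ i, Y (f i)) := by
            apply mul_nonneg hlam0
            rw [mul_comm] at hPf
            linarith
          calc (1:ℝ) = Real.exp 0 := Real.exp_zero.symm
            _ ≤ _ := Real.exp_le_exp.mpr this
      _ ≤ ∑ f : Fin s → τ, Real.exp (lam * (s * T - ∑ i, Y (f i))) :=
          Finset.sum_le_sum_of_subset_of_nonneg (Finset.filter_subset _ _)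
            (fun _ _ _ => (Real.exp_pos _).le)
      _ = Real.exp (lam * (s * T)) * ∑ f : Fin s → τ, ∏ i, Real.exp (-lam * Y (f i)) := by
          rw [Finset.mul_sum]
          apply Finset.sum_congr rfl
          intro f _
          rw [← Real.exp_sum, ← Real.exp_add]
          congr 1
          have hns : ∑ i, -lam * Y (f i) = -lam * ∑ i, Y (f i) := by
            rw [← Finset.mul_sum]
          rw [hns]
          ring
      _ = Real.exp (lam * (s * T)) * (∑ x : τ, Real.exp (-lam * Y x)) ^ s := by
          rw [Fintype.sum_pow (fun x : τ => Real.exp (-lam * Y x)) s]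
  -- combine
  have hApos : (0:ℝ) ≤ ∑ x : τ, Real.exp (-lam * Y x) :=
    Finset.sum_nonneg fun x _ => (Real.exp_pos _).le
  have hfinal : (E.card : ℝ)
      ≤ (N:ℝ) ^ s * Real.exp ((s:ℝ) * (lam * (T - μ) + lam ^ 2 * M ^ 2 / 2)) := by
    calc (E.card : ℝ)
        ≤ Real.exp (lam * (s * T)) * (∑ x : τ, Real.exp (-lam * Y x)) ^ s := hchern
      _ ≤ Real.exp (lam * (s * T)) * ((N:ℝ) * Real.exp (-lam * μ + lam ^ 2 * M ^ 2 / 2)) ^ s := by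
          apply mul_le_mul_of_nonneg_left _ (Real.exp_pos _).le
          exact pow_le_pow_left₀ hApos hmgf s
      _ = (N:ℝ) ^ s * Real.exp ((s:ℝ) * (lam * (T - μ) + lam ^ 2 * M ^ 2 / 2)) := by
          rw [mul_pow, ← Real.exp_nat_mul, ← mul_assoc,
            mul_comm (Real.exp (lam * ((s:ℝ) * T))) ((N:ℝ) ^ s), mul_assoc, ← Real.exp_add]
          congr 1
          ring
  have hexp_le : (s:ℝ) * (lam * (T - μ) + lam ^ 2 * M ^ 2 / 2)
      ≤ -(2 * (s : ℝ) * β ^ 2 * m ^ 2) / M ^ 2 := by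
    have hTμ : T - μ ≤ -(2 * β * m) := by
      rw [hT_def]
      rw [hμ_def] at hbad ⊢
      have hr : (α + β) * m + γ + 2 * β * m = (α + 3 * β) * m + γ := by ring
      linarith
    have h1 : lam * (T - μ) ≤ lam * (-(2 * β * m)) :=
      mul_le_mul_of_nonneg_left hTμ hlam0
    have h2 : lam * (-(2 * β * m)) + lam ^ 2 * M ^ 2 / 2 = -(2 * β ^ 2 * m ^ 2) / M ^ 2 := by
      rw [hlam_def]
      field_simp
      ring
    have h3 : lam * (T - μ) + lam ^ 2 * M ^ 2 / 2 ≤ -(2 * β ^ 2 * m ^ 2) / M ^ 2 := by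
      rw [← h2]; exact add_le_add_left h1 _
    calc (s:ℝ) * (lam * (T - μ) + lam ^ 2 * M ^ 2 / 2)
        ≤ (s:ℝ) * (-(2 * β ^ 2 * m ^ 2) / M ^ 2) :=
          mul_le_mul_of_nonneg_left h3 (le_of_lt hspos)
      _ = -(2 * (s : ℝ) * β ^ 2 * m ^ 2) / M ^ 2 := by ring
  rw [samplePr, hcard]
  rw [div_le_iff₀ (by positivity : (0:ℝ) < ((D.card:ℝ)) ^ s)]
  calc (E.card : ℝ)
      ≤ (N:ℝ) ^ s * Real.exp ((s:ℝ) * (lam * (T - μ) + lam ^ 2 * M ^ 2 / 2)) := hfinal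
    _ ≤ (N:ℝ) ^ s * Real.exp (-(2 * (s : ℝ) * β ^ 2 * m ^ 2) / M ^ 2) := by
        apply mul_le_mul_of_nonneg_left (Real.exp_le_exp.mpr hexp_le) (by positivity)
    _ = Real.exp (-(2 * (s : ℝ) * β ^ 2 * m ^ 2) / M ^ 2) * (D.card:ℝ) ^ s := by
        rw [hN_def]; ring
end

section
/- Let (V,d) be a finite metric space with |V| = n ≥ 2 points and diameter at most M, D ⊆ V nonempty, k ≥ 1, α ≥ 1, β > 0, γ ≥ 0, 0 < θ < 1, and assume med_avg(D,k) > 0. Let S = (X_1,…,X_s) be s independent uniform samples from D with s ≥ (M² / (2·β²·(med_avg(D,k))²))·(ln(1/θ) + k·ln n). Let ℂ be the set of all k-element subsets of V that are (α + 3β, γ)-bad solutions for the k-median problem on D. Then Pr[ ∃ C_b ∈ ℂ : cost^med_avg(S, C_b) ≤ (α + β)·med_avg(D,k) + γ ] ≤ θ. -/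
open Finset


private lemma myMonoAux {f f' : ℝ → ℝ} (hd : ∀ x, HasDerivAt f (f' x) x)
    (h : ∀ x, 0 ≤ x → 0 ≤ f' x) {x : ℝ} (hx : 0 ≤ x) : f 0 ≤ f x := by
  have hmono : MonotoneOn f (Set.Ici (0:ℝ)) := by
    apply monotoneOn_of_deriv_nonneg (convex_Ici 0)
    · exact fun y _ => ((hd y).differentiableAt).continuousAt.continuousWithinAt
    · exact fun y _ => (hd y).differentiableAt.differentiableWithinAt
    · intro y hy
      rw [interior_Ici] at hy
      rw [(hd y).deriv]
      exact h y (le_of_lt hy)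
  exact hmono Set.self_mem_Ici hx hx

private lemma sinh_le_mul_cosh {x : ℝ} (hx : 0 ≤ x) : Real.sinh x ≤ x * Real.cosh x := by
  have key := myMonoAux (f := fun x => x * Real.cosh x - Real.sinh x)
      (f' := fun y => y * Real.sinh y) (fun y => ?_) (fun y hy => ?_) hx
  · simpa using key
  · have h1 : HasDerivAt (fun x => x * Real.cosh x - Real.sinh x)
        (1 * Real.cosh y + y * Real.sinh y - Real.cosh y) y :=
      ((hasDerivAt_id y).mul (Real.hasDerivAt_cosh y)).sub (Real.hasDerivAt_sinh y)
    convert h1 using 1; ring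
  · exact mul_nonneg hy (by rwa [Real.sinh_nonneg_iff])

private lemma cosh_le_exp_half_sq {x : ℝ} (hx : 0 ≤ x) :
    Real.cosh x ≤ Real.exp (x ^ 2 / 2) := by
  have hlog : Real.log (Real.cosh x) ≤ x ^ 2 / 2 := by
    have key := myMonoAux (f := fun x => x ^ 2 / 2 - Real.log (Real.cosh x))
        (f' := fun y => y - Real.sinh y / Real.cosh y) (fun y => ?_) (fun y hy => ?_) hx
    · simpa using key
    · have h1 : HasDerivAt (fun x => x ^ 2 / 2 - Real.log (Real.cosh x))
          ((2 : ℕ) * y ^ 1 / 2 - Real.sinh y / Real.cosh y) y :=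
        ((hasDerivAt_pow 2 y).div_const 2).sub
          ((Real.hasDerivAt_cosh y).log (ne_of_gt (Real.cosh_pos y)))
      convert h1 using 1; ring
    · have := sinh_le_mul_cosh hy
      rw [sub_nonneg, div_le_iff₀ (Real.cosh_pos y)]
      linarith
  calc Real.cosh x = Real.exp (Real.log (Real.cosh x)) :=
        (Real.exp_log (Real.cosh_pos x)).symm
    _ ≤ Real.exp (x ^ 2 / 2) := Real.exp_le_exp.2 hlog

private lemma exp_le_cosh_add {a u : ℝ} (h1 : -1 ≤ u) (h2 : u ≤ 1) :
    Real.exp (a * u) ≤ Real.cosh a + u * Real.sinh a := by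
  have key := convexOn_exp.2 (Set.mem_univ a) (Set.mem_univ (-a))
      (by linarith : (0:ℝ) ≤ (1 + u) / 2) (by linarith : (0:ℝ) ≤ (1 - u) / 2) (by ring)
  simp only [smul_eq_mul] at key
  have harg : (1 + u) / 2 * a + (1 - u) / 2 * (-a) = a * u := by ring
  rw [harg] at key
  calc Real.exp (a * u) ≤ (1 + u) / 2 * Real.exp a + (1 - u) / 2 * Real.exp (-a) := key
    _ = Real.cosh a + u * Real.sinh a := by rw [Real.cosh_eq, Real.sinh_eq]; ring


private lemma chernoff_count {X : Type*} [Fintype X] [Nonempty X] [DecidableEq X]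
    (g : X → ℝ) (M : ℝ) (hM : 0 < M) (hg0 : ∀ x, 0 ≤ g x) (hgM : ∀ x, g x ≤ M)
    (s : ℕ) (τ lam : ℝ) (hlam : 0 ≤ lam) :
    ((Finset.univ.filter (fun f : Fin s → X => ∑ i, g (f i) ≤ s * τ)).card : ℝ) ≤
      (Fintype.card X : ℝ) ^ s *
        Real.exp (s * (lam * (τ - (∑ x, g x) / Fintype.card X) + lam ^ 2 * M ^ 2 / 2)) := by
  set N : ℝ := (Fintype.card X : ℝ) with hN
  have hN0 : 0 < N := by positivity
  set μ : ℝ := (∑ x, g x) / N with hμ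
  have hsumμ : ∑ x, g x = N * μ := by rw [hμ, mul_div_assoc', mul_div_cancel_left₀ _ hN0.ne']
  have hμ0 : 0 ≤ μ := by
    apply div_nonneg _ hN0.le
    exact Finset.sum_nonneg fun x _ => hg0 x
  have hμM : μ ≤ M := by
    rw [hμ, div_le_iff₀ hN0]
    calc ∑ x, g x ≤ ∑ _x : X, M := Finset.sum_le_sum fun x _ => hgM x
      _ = M * N := by rw [Finset.sum_const, Finset.card_univ]; simp [hN, mul_comm]
  -- step 1: indicator bound
  have h1 : ((Finset.univ.filter (fun f : Fin s → X => ∑ i, g (f i) ≤ s * τ)).card : ℝ) ≤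
      ∑ f : Fin s → X, Real.exp (lam * (s * τ - ∑ i, g (f i))) := by
    rw [Finset.card_eq_sum_ones, Nat.cast_sum]
    calc (∑ _f ∈ Finset.univ.filter (fun f : Fin s → X => ∑ i, g (f i) ≤ s * τ), ((1:ℕ):ℝ))
        ≤ ∑ f ∈ Finset.univ.filter (fun f : Fin s → X => ∑ i, g (f i) ≤ s * τ),
            Real.exp (lam * (s * τ - ∑ i, g (f i))) := by
          apply Finset.sum_le_sum
          intro f hf
          rw [Finset.mem_filter] at hf
          simpa using Real.one_le_exp (mul_nonneg hlam (by linarith [hf.2]))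
      _ ≤ ∑ f : Fin s → X, Real.exp (lam * (s * τ - ∑ i, g (f i))) :=
          Finset.sum_le_sum_of_subset_of_nonneg (Finset.filter_subset _ _)
            (fun _ _ _ => (Real.exp_pos _).le)
  -- step 2: factor as product
  have h2 : ∑ f : Fin s → X, Real.exp (lam * (s * τ - ∑ i, g (f i))) =
      Real.exp (lam * s * τ) * (∑ x, Real.exp (-lam * g x)) ^ s := by
    rw [Fintype.sum_pow, Finset.mul_sum]
    apply Finset.sum_congr rfl
    intro f _
    rw [← Real.exp_sum, ← Real.exp_add]
    congr 1
    have : ∑ i, -lam * g (f i) = -lam * ∑ i, g (f i) := by rw [← Finset.mul_sum]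
    rw [this]; ring
  -- step 3: per-point bound
  have h3 : ∑ x, Real.exp (-lam * g x) ≤ N * Real.exp (-lam * μ + lam ^ 2 * M ^ 2 / 2) := by
    have key : ∀ x : X, Real.exp (-lam * g x) ≤
        (Real.cosh (lam * M) + (μ - g x) / M * Real.sinh (lam * M)) * Real.exp (-lam * μ) := by
      intro x
      have harg : -lam * g x = lam * M * ((μ - g x) / M) + -lam * μ := by
        field_simp; ring
      rw [harg, Real.exp_add]
      apply mul_le_mul_of_nonneg_right _ (Real.exp_pos _).le
      apply exp_le_cosh_add
      · rw [neg_le, ← neg_div, div_le_one hM]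
        have := hg0 x; have := hgM x; nlinarith
      · rw [div_le_one hM]
        have := hg0 x; nlinarith
    calc ∑ x, Real.exp (-lam * g x)
        ≤ ∑ x, (Real.cosh (lam * M) + (μ - g x) / M * Real.sinh (lam * M)) *
            Real.exp (-lam * μ) := Finset.sum_le_sum fun x _ => key x
      _ = N * Real.cosh (lam * M) * Real.exp (-lam * μ) := by
          rw [← Finset.sum_mul]
          congr 1
          rw [Finset.sum_add_distrib, Finset.sum_const]
          have hz : ∑ x, (μ - g x) / M * Real.sinh (lam * M) = 0 := by
            rw [← Finset.sum_mul, ← Finset.sum_div]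
            have : ∑ x, (μ - g x) = 0 := by
              rw [Finset.sum_sub_distrib, Finset.sum_const, hsumμ]
              simp [hN, mul_comm]
            rw [this]; simp
          rw [hz, Finset.card_univ]
          simp [hN, mul_comm]
      _ ≤ N * Real.exp ((lam * M) ^ 2 / 2) * Real.exp (-lam * μ) := by
          apply mul_le_mul_of_nonneg_right _ (Real.exp_pos _).le
          exact mul_le_mul_of_nonneg_left
            (cosh_le_exp_half_sq (mul_nonneg hlam hM.le)) hN0.le
      _ = N * Real.exp (-lam * μ + lam ^ 2 * M ^ 2 / 2) := by
          rw [mul_assoc, ← Real.exp_add]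
          congr 2
          ring
  -- combine
  calc ((Finset.univ.filter (fun f : Fin s → X => ∑ i, g (f i) ≤ s * τ)).card : ℝ)
      ≤ Real.exp (lam * s * τ) * (∑ x, Real.exp (-lam * g x)) ^ s := h1.trans_eq h2
    _ ≤ Real.exp (lam * s * τ) * (N * Real.exp (-lam * μ + lam ^ 2 * M ^ 2 / 2)) ^ s := by
        apply mul_le_mul_of_nonneg_left _ (Real.exp_pos _).le
        exact pow_le_pow_left₀ (Finset.sum_nonneg fun x _ => (Real.exp_pos _).le) h3 s
    _ = N ^ s * Real.exp (s * (lam * (τ - μ) + lam ^ 2 * M ^ 2 / 2)) := by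
        rw [mul_pow, ← Real.exp_nat_mul, ← mul_assoc, mul_comm (Real.exp _) (N ^ s),
          mul_assoc, ← Real.exp_add]
        congr 2
        ring

private lemma samplePr_eq {V : Type*} (D : Finset V) (s : ℕ)
    (P : (Fin s → {x // x ∈ D}) → Prop) [DecidablePred P] :
    samplePr D s P = ((Finset.univ.filter P).card : ℝ) / ((D.card : ℝ) ^ s) := by
  have h : Nat.card {f : Fin s → {x // x ∈ D} // P f} = (Finset.univ.filter P).card := by
    rw [Nat.card_eq_fintype_card, Fintype.card_subtype]
  unfold samplePr
  rw [h]

theorem no_bad_solution_looks_good_on_sample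
    {V : Type*} [MetricSpace V] [Fintype V]
    (hn : 2 ≤ Fintype.card V)
    (M : ℝ) (hdiam : ∀ u v : V, dist u v ≤ M)
    (D : Finset V) (hD : D.Nonempty)
    (k : ℕ) (hk : 1 ≤ k)
    (α β γ θ : ℝ) (hα : 1 ≤ α) (hβ : 0 < β) (hγ : 0 ≤ γ)
    (hθ0 : 0 < θ) (hθ1 : θ < 1)
    (hpos : 0 < medAvg V D k)
    (s : ℕ)
    (hs : (s : ℝ) ≥ M ^ 2 / (2 * β ^ 2 * (medAvg V D k) ^ 2) *
      (Real.log (1 / θ) + k * Real.log (Fintype.card V))) :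
    samplePr D s (fun f => ∃ Cb : Finset V, Cb.card = k ∧
        costMedAvg D Cb > (α + 3 * β) * medAvg V D k + γ ∧
        sampleCostMed f Cb ≤ (α + β) * medAvg V D k + γ) ≤ θ := by
  classical
  set n : ℕ := Fintype.card V with hnV
  set m : ℝ := medAvg V D k with hm
  have hDcard : (0:ℝ) < (D.card : ℝ) := by exact_mod_cast hD.card_pos
  -- k ≤ n
  have hkn : k ≤ n := by
    by_contra hcon
    push_neg at hcon
    have hempty : {y : ℝ | ∃ C : Finset V, C.card = k ∧
        y = ∑ x ∈ D, Metric.infDist x (C : Set V)} = ∅ := by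
      ext y
      simp only [Set.mem_setOf_eq, Set.mem_empty_iff_false, iff_false, not_exists]
      rintro C ⟨hC, -⟩
      have h1 := Finset.card_le_univ C
      rw [← hnV] at h1
      omega
    have hz : medAvg V D k = 0 := by
      unfold medAvg
      rw [hempty, Real.sInf_empty, zero_div]
    rw [← hm] at hz
    linarith
  -- m ≤ M, 0 < M
  obtain ⟨C₀, -, hC₀card⟩ := Finset.exists_subset_card_eq
    (show k ≤ (Finset.univ : Finset V).card by rwa [Finset.card_univ])
  obtain ⟨c₀, hc₀⟩ : C₀.Nonempty := Finset.card_pos.1 (by omega)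
  have hbdd : BddBelow {y : ℝ | ∃ C : Finset V, C.card = k ∧
      y = ∑ x ∈ D, Metric.infDist x (C : Set V)} := by
    refine ⟨0, fun y hy => ?_⟩
    obtain ⟨C, -, rfl⟩ := hy
    exact Finset.sum_nonneg fun x _ => Metric.infDist_nonneg
  have hmM : m ≤ M := by
    rw [hm]
    unfold medAvg
    rw [div_le_iff₀ hDcard]
    calc sInf {y : ℝ | ∃ C : Finset V, C.card = k ∧
          y = ∑ x ∈ D, Metric.infDist x (C : Set V)}
        ≤ ∑ x ∈ D, Metric.infDist x (C₀ : Set V) := csInf_le hbdd ⟨C₀, hC₀card, rfl⟩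
      _ ≤ ∑ _x ∈ D, M := Finset.sum_le_sum fun x _ =>
          (Metric.infDist_le_dist_of_mem (Finset.mem_coe.2 hc₀)).trans (hdiam x c₀)
      _ = M * D.card := by rw [Finset.sum_const, nsmul_eq_mul, mul_comm]
  have hM0 : 0 < M := lt_of_lt_of_le hpos hmM
  -- positivity of log terms, s > 0
  have hn0 : (0:ℝ) < (n : ℝ) := by exact_mod_cast (by omega : 0 < n)
  have hn1 : (1:ℝ) ≤ (n : ℝ) := by exact_mod_cast (by omega : 1 ≤ n)
  have hlogθ : 0 < Real.log (1 / θ) := Real.log_pos (by rw [one_div]; exact (one_lt_inv₀ hθ0).2 hθ1)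
  have hlogn : 0 ≤ Real.log (n : ℝ) := Real.log_nonneg hn1
  have hL : 0 < Real.log (1 / θ) + (k : ℝ) * Real.log (n : ℝ) := by
    have := mul_nonneg (by positivity : (0:ℝ) ≤ (k:ℝ)) hlogn
    linarith
  have hcoef : 0 < M ^ 2 / (2 * β ^ 2 * m ^ 2) := by positivity
  have hs0 : 0 < s := by
    rcases Nat.eq_zero_or_pos s with h | h
    · exfalso
      rw [h] at hs
      have h0 : (0:ℝ) ≥ M ^ 2 / (2 * β ^ 2 * m ^ 2) *
          (Real.log (1 / θ) + (k : ℝ) * Real.log (n : ℝ)) := by exact_mod_cast hs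
      nlinarith [mul_pos hcoef hL]
    · exact h
  have hs0' : (0:ℝ) < (s : ℝ) := by exact_mod_cast hs0
  -- the key exponential bound
  have hkey : (Real.log (1 / θ) + (k : ℝ) * Real.log (n : ℝ)) ≤ (s:ℝ) * (2 * β ^ 2 * m ^ 2 / M ^ 2) := by
    have hd : (0:ℝ) < 2 * β ^ 2 * m ^ 2 / M ^ 2 := by positivity
    have h1 := mul_le_mul_of_nonneg_right hs hd.le
    have h2 : M ^ 2 / (2 * β ^ 2 * m ^ 2) *
        (Real.log (1 / θ) + (k : ℝ) * Real.log (n : ℝ)) * (2 * β ^ 2 * m ^ 2 / M ^ 2) =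
        Real.log (1 / θ) + (k : ℝ) * Real.log (n : ℝ) := by
      field_simp
    rw [h2] at h1
    exact h1
  have hexpθ : Real.exp ((s:ℝ) * (-(2 * β ^ 2 * m ^ 2 / M ^ 2))) ≤ θ * ((n : ℝ) ^ k)⁻¹ := by
    have h1 : Real.exp ((s:ℝ) * (-(2 * β ^ 2 * m ^ 2 / M ^ 2))) ≤
        Real.exp (-(Real.log (1 / θ) + (k : ℝ) * Real.log (n : ℝ))) := by
      apply Real.exp_le_exp.2
      have : (s:ℝ) * (-(2 * β ^ 2 * m ^ 2 / M ^ 2)) = -((s:ℝ) * (2 * β ^ 2 * m ^ 2 / M ^ 2)) := by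
        ring
      rw [this]
      linarith
    have h2 : Real.exp (-(Real.log (1 / θ) + (k : ℝ) * Real.log (n : ℝ))) =
        θ * ((n : ℝ) ^ k)⁻¹ := by
      rw [neg_add, Real.exp_add]
      congr 1
      · rw [Real.exp_neg, Real.exp_log (by positivity : (0:ℝ) < 1 / θ), one_div, inv_inv]
      · rw [Real.exp_neg, Real.exp_nat_mul, Real.exp_log hn0]
    linarith
  -- union bound setup
  set τ : ℝ := (α + β) * m + γ with hτ
  set Bad : Finset (Finset V) :=
    Finset.univ.filter (fun C => C.card = k ∧ (α + 3 * β) * m + γ < costMedAvg D C) with hBad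
  have hBadcard : ((Bad.card : ℝ)) ≤ (n : ℝ) ^ k := by
    have h1 : Bad ⊆ Finset.powersetCard k Finset.univ := by
      intro C hC
      rw [Finset.mem_powersetCard_univ]
      exact ((Finset.mem_filter.1 hC).2).1
    have h2 : Bad.card ≤ n.choose k := by
      have := Finset.card_le_card h1
      rwa [Finset.card_powersetCard, Finset.card_univ, ← hnV] at this
    have h3 : n.choose k ≤ n ^ k :=
      (Nat.choose_le_descFactorial n k).trans (Nat.descFactorial_le_pow n k)
    exact_mod_cast h2.trans h3
  haveI : Nonempty {x // x ∈ D} := ⟨⟨hD.choose, hD.choose_spec⟩⟩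
  -- per bad-solution bound
  have bound_C : ∀ C ∈ Bad,
      (((Finset.univ.filter (fun f : Fin s → {x // x ∈ D} => sampleCostMed f C ≤ τ)).card : ℝ))
        ≤ (D.card : ℝ) ^ s * (θ * ((n : ℝ) ^ k)⁻¹) := by
    intro C hC
    obtain ⟨-, hCk, hCbad⟩ := Finset.mem_filter.1 hC
    obtain ⟨c, hc⟩ : C.Nonempty := Finset.card_pos.1 (by omega)
    set g : {x // x ∈ D} → ℝ := fun x => Metric.infDist (x : V) (C : Set V) with hg
    set lam : ℝ := 2 * β * m / M ^ 2 with hlam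
    have hlam0 : 0 ≤ lam := by positivity
    have hfilter : (Finset.univ.filter (fun f : Fin s → {x // x ∈ D} => sampleCostMed f C ≤ τ)) =
        Finset.univ.filter (fun f : Fin s → {x // x ∈ D} => ∑ i, g (f i) ≤ (s:ℝ) * τ) := by
      apply Finset.filter_congr
      intro f _
      show sampleCostMed f C ≤ τ ↔ _
      unfold sampleCostMed
      rw [div_le_iff₀ hs0', mul_comm]
    have hcc := chernoff_count g M hM0 (fun x => Metric.infDist_nonneg)
      (fun x => (Metric.infDist_le_dist_of_mem (Finset.mem_coe.2 hc)).trans (hdiam _ c))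
      s τ lam hlam0
    have hcardD : (Fintype.card {x // x ∈ D} : ℝ) = (D.card : ℝ) := by
      exact_mod_cast Fintype.card_coe D
    have hμeq : (∑ x : {x // x ∈ D}, g x) / (Fintype.card {x // x ∈ D} : ℝ) = costMedAvg D C := by
      rw [hcardD]
      unfold costMedAvg
      congr 1
      simp only [hg]
      exact Finset.sum_coe_sort D fun v => Metric.infDist v (C : Set V)
    rw [hμeq, hcardD] at hcc
    have hexp2 : (s:ℝ) * (lam * (τ - costMedAvg D C) + lam ^ 2 * M ^ 2 / 2) ≤
        (s:ℝ) * (-(2 * β ^ 2 * m ^ 2 / M ^ 2)) := by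
      apply mul_le_mul_of_nonneg_left _ hs0'.le
      have h1 : τ - costMedAvg D C ≤ -(2 * β * m) := by
        rw [hτ]; linarith
      have h2 : lam * (τ - costMedAvg D C) ≤ lam * (-(2 * β * m)) :=
        mul_le_mul_of_nonneg_left h1 hlam0
      have h3 : lam * (-(2 * β * m)) + lam ^ 2 * M ^ 2 / 2 = -(2 * β ^ 2 * m ^ 2 / M ^ 2) := by
        rw [hlam]
        field_simp
        ring
      have h4 := add_le_add_right h2 (lam ^ 2 * M ^ 2 / 2)
      linarith
    calc (((Finset.univ.filter (fun f : Fin s → {x // x ∈ D} => sampleCostMed f C ≤ τ)).card : ℝ))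
        = (((Finset.univ.filter
            (fun f : Fin s → {x // x ∈ D} => ∑ i, g (f i) ≤ (s:ℝ) * τ)).card : ℝ)) := by
          rw [hfilter]
      _ ≤ (D.card : ℝ) ^ s *
            Real.exp ((s:ℝ) * (lam * (τ - costMedAvg D C) + lam ^ 2 * M ^ 2 / 2)) := hcc
      _ ≤ (D.card : ℝ) ^ s * Real.exp ((s:ℝ) * (-(2 * β ^ 2 * m ^ 2 / M ^ 2))) := by
          apply mul_le_mul_of_nonneg_left (Real.exp_le_exp.2 hexp2) (by positivity)
      _ ≤ (D.card : ℝ) ^ s * (θ * ((n : ℝ) ^ k)⁻¹) := by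
          apply mul_le_mul_of_nonneg_left hexpθ (by positivity)
  -- assemble
  rw [samplePr_eq]
  rw [div_le_iff₀ (by positivity : (0:ℝ) < (D.card : ℝ) ^ s)]
  have hsub : (Finset.univ.filter (fun f : Fin s → {x // x ∈ D} => ∃ Cb : Finset V,
        Cb.card = k ∧ costMedAvg D Cb > (α + 3 * β) * m + γ ∧ sampleCostMed f Cb ≤ τ))
      ⊆ Bad.biUnion (fun C =>
        Finset.univ.filter (fun f : Fin s → {x // x ∈ D} => sampleCostMed f C ≤ τ)) := by
    intro f hf
    obtain ⟨-, Cb, hc1, hc2, hc3⟩ := Finset.mem_filter.1 hf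
    rw [Finset.mem_biUnion]
    exact ⟨Cb, Finset.mem_filter.2 ⟨Finset.mem_univ _, hc1, hc2⟩,
      Finset.mem_filter.2 ⟨Finset.mem_univ _, hc3⟩⟩
  calc ((Finset.univ.filter (fun f : Fin s → {x // x ∈ D} => ∃ Cb : Finset V,
        Cb.card = k ∧ costMedAvg D Cb > (α + 3 * β) * m + γ ∧
          sampleCostMed f Cb ≤ τ)).card : ℝ)
      ≤ ((Bad.biUnion (fun C => Finset.univ.filter
          (fun f : Fin s → {x // x ∈ D} => sampleCostMed f C ≤ τ))).card : ℝ) := by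
        exact_mod_cast Finset.card_le_card hsub
    _ ≤ ∑ C ∈ Bad, (((Finset.univ.filter
          (fun f : Fin s → {x // x ∈ D} => sampleCostMed f C ≤ τ)).card : ℝ)) := by
        exact_mod_cast Finset.card_biUnion_le
    _ ≤ ∑ _C ∈ Bad, (D.card : ℝ) ^ s * (θ * ((n : ℝ) ^ k)⁻¹) :=
        Finset.sum_le_sum bound_C
    _ = (Bad.card : ℝ) * ((D.card : ℝ) ^ s * (θ * ((n : ℝ) ^ k)⁻¹)) := by
        rw [Finset.sum_const, nsmul_eq_mul]
    _ ≤ (n : ℝ) ^ k * ((D.card : ℝ) ^ s * (θ * ((n : ℝ) ^ k)⁻¹)) := by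
        apply mul_le_mul_of_nonneg_right hBadcard (by positivity)
    _ = θ * (D.card : ℝ) ^ s := by
        field_simp
end

section
/- Let A be a randomized algorithm mapping finite subsets of V to probability measures on Ω that is ε-differentially private (ε ≥ 0), meaning for every finite S ⊆ V, every y ∈ V \ S, and every measurable C ⊆ Ω, Pr[A(S ∪ {y}) ∈ C] ≤ e^ε·Pr[A(S) ∈ C] and Pr[A(S) ∈ C] ≤ e^ε·Pr[A(S ∪ {y}) ∈ C]. Let 0 < ξ < 1, let D' ⊆ D be finite sets with |D \ D'| = g, and let T be an integer with 0 ≤ T ≤ g. Then for every measurable C ⊆ Ω, the subsampled algorithm A' satisfies Pr[A'(D) ∈ C] ≤ e^{T·ε}·Pr[A'(D') ∈ C] + δ_{T,ξ,g}, where δ_{T,ξ,g} = 1 − ∑_{j=0}^{T} binom(g, j)·ξ^j·(1 − ξ)^{g−j}. -/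
open Finset MeasureTheory

section Aux
variable {V : Type*} [DecidableEq V]

/-- Decompose a sum over the powerset of a disjoint union. -/
lemma sum_powerset_union_disjoint (s : Finset V) :
    ∀ t : Finset V, Disjoint s t → ∀ f : Finset V → ℝ,
    ∑ u ∈ (s ∪ t).powerset, f u = ∑ a ∈ s.powerset, ∑ b ∈ t.powerset, f (a ∪ b) := by
  intro t
  induction t using Finset.induction_on with
  | empty => intro _ f; simp
  | @insert x t hx ih =>
    intro hst f
    have hxs : x ∉ s := fun h => (Finset.disjoint_left.mp hst h (mem_insert_self x t))
    have hst' : Disjoint s t := hst.mono_right (Finset.subset_insert x t)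
    have hxu : x ∉ s ∪ t := by simp [hxs, hx]
    rw [Finset.union_insert, Finset.sum_powerset_insert hxu, ih hst' f,
      ih hst' (fun u => f (insert x u))]
    rw [← Finset.sum_add_distrib]
    refine Finset.sum_congr rfl fun a _ => ?_
    rw [Finset.sum_powerset_insert hx]
    simp only [Finset.union_insert]

lemma sum_weights (ξ : ℝ) (s : Finset V) :
    ∑ t ∈ s.powerset, ξ ^ t.card * (1 - ξ) ^ (s.card - t.card) = 1 := by
  induction s using Finset.induction_on with
  | empty => simp
  | @insert x s hx ih =>
    rw [Finset.sum_powerset_insert hx]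
    have h1 : ∑ t ∈ s.powerset, ξ ^ t.card * (1 - ξ) ^ ((insert x s).card - t.card)
        = (1 - ξ) * ∑ t ∈ s.powerset, ξ ^ t.card * (1 - ξ) ^ (s.card - t.card) := by
      rw [Finset.mul_sum]
      refine Finset.sum_congr rfl fun t ht => ?_
      have htc : t.card ≤ s.card := card_le_card (mem_powerset.mp ht)
      rw [card_insert_of_notMem hx]
      have : s.card + 1 - t.card = (s.card - t.card) + 1 := by omega
      rw [this, pow_succ]
      ring
    have h2 : ∑ t ∈ s.powerset, ξ ^ (insert x t).card * (1 - ξ) ^ ((insert x s).card - (insert x t).card)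
        = ξ * ∑ t ∈ s.powerset, ξ ^ t.card * (1 - ξ) ^ (s.card - t.card) := by
      rw [Finset.mul_sum]
      refine Finset.sum_congr rfl fun t ht => ?_
      have hxt : x ∉ t := fun h => hx (mem_powerset.mp ht h)
      rw [card_insert_of_notMem hx, card_insert_of_notMem hxt]
      have : s.card + 1 - (t.card + 1) = s.card - t.card := by omega
      rw [this, pow_succ]
      ring
    rw [h1, h2, ih]
    ring

end Aux

section Priv
variable {V Ω : Type*} [DecidableEq V] [MeasurableSpace Ω]

lemma group_priv (A : Finset V → Measure Ω)
    (ε : ℝ) (hε : 0 ≤ ε)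
    (hDP : ∀ S : Finset V, ∀ y : V, y ∉ S → ∀ C : Set Ω, MeasurableSet C →
      ((A (insert y S)) C).toReal ≤ Real.exp ε * ((A S) C).toReal ∧
      ((A S) C).toReal ≤ Real.exp ε * ((A (insert y S)) C).toReal)
    (C : Set Ω) (hC : MeasurableSet C) :
    ∀ J S : Finset V, Disjoint J S →
      (A (S ∪ J) C).toReal ≤ Real.exp ((J.card : ℝ) * ε) * (A S C).toReal := by
  intro J
  induction J using Finset.induction_on with
  | empty => intro S _; simp
  | @insert x J hx ih =>
    intro S hdis
    have hxS : x ∉ S ∪ J := by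
      simp only [Finset.mem_union, not_or]
      exact ⟨fun h => Finset.disjoint_left.mp hdis (mem_insert_self x J) h, hx⟩
    have hdis' : Disjoint J S := hdis.mono_left (Finset.subset_insert x J)
    have h1 := (hDP (S ∪ J) x hxS C hC).1
    have h2 := ih S hdis'
    have hAnn : (0:ℝ) ≤ (A S C).toReal := ENNReal.toReal_nonneg
    calc (A (S ∪ insert x J) C).toReal
        = (A (insert x (S ∪ J)) C).toReal := by rw [Finset.union_insert]
      _ ≤ Real.exp ε * (A (S ∪ J) C).toReal := h1
      _ ≤ Real.exp ε * (Real.exp ((J.card : ℝ) * ε) * (A S C).toReal) := by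
          exact mul_le_mul_of_nonneg_left h2 (Real.exp_pos ε).le
      _ = Real.exp (((insert x J).card : ℝ) * ε) * (A S C).toReal := by
          rw [Finset.card_insert_of_notMem hx, ← mul_assoc, ← Real.exp_add]
          push_cast
          ring_nf

end Priv

theorem subsampled_group_privacy {V Ω : Type*} [DecidableEq V] [MeasurableSpace Ω]
    (A : Finset V → Measure Ω)
    (hA : ∀ S : Finset V, IsProbabilityMeasure (A S))
    (ε : ℝ) (hε : 0 ≤ ε)
    (hDP : ∀ S : Finset V, ∀ y : V, y ∉ S → ∀ C : Set Ω, MeasurableSet C →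
      ((A (insert y S)) C).toReal ≤ Real.exp ε * ((A S) C).toReal ∧
      ((A S) C).toReal ≤ Real.exp ε * ((A (insert y S)) C).toReal)
    (ξ : ℝ) (hξ0 : 0 < ξ) (hξ1 : ξ < 1)
    (D' D : Finset V) (hsub : D' ⊆ D) (g : ℕ) (hg : (D \ D').card = g)
    (T : ℕ) (hT : T ≤ g)
    (C : Set Ω) (hC : MeasurableSet C) :
    subPr A ξ D C ≤ Real.exp ((T : ℝ) * ε) * subPr A ξ D' C +
      (1 - ∑ j ∈ Finset.range (T + 1),
        (g.choose j : ℝ) * ξ ^ j * (1 - ξ) ^ (g - j)) := by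
  have hξ1' : (0:ℝ) ≤ 1 - ξ := by linarith
  set G := D \ D' with hGdef
  have hdisj : Disjoint D' G := Finset.disjoint_sdiff
  have hD : D' ∪ G = D := Finset.union_sdiff_of_subset hsub
  have hGcard : G.card = g := hg
  have hDcard : D.card = D'.card + g := by
    have h := Finset.card_sdiff_add_card_eq_card hsub
    rw [← hGdef] at h; omega
  set P : Finset V → ℝ := fun S => ((A S) C).toReal with hPdef
  have hPnn : ∀ S : Finset V, 0 ≤ P S := fun S => ENNReal.toReal_nonneg
  have hP1 : ∀ S : Finset V, P S ≤ 1 := by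
    intro S
    have h1 : (A S) C ≤ 1 := prob_le_one
    have := ENNReal.toReal_mono ENNReal.one_ne_top h1
    simpa using this
  set w' : Finset V → ℝ := fun a => ξ ^ a.card * (1 - ξ) ^ (D'.card - a.card) with hw'def
  have hw'nn : ∀ a : Finset V, 0 ≤ w' a := fun a =>
    mul_nonneg (pow_nonneg hξ0.le _) (pow_nonneg hξ1' _)
  set F : Finset V → ℝ := fun b => ∑ a ∈ D'.powerset, w' a * P (a ∪ b) with hFdef
  set B : ℝ := Real.exp ((T : ℝ) * ε) * subPr A ξ D' C with hBdef
  have hsubPr' : subPr A ξ D' C = ∑ a ∈ D'.powerset, w' a * P a := by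
    simp only [subPr, hw'def, hPdef, mul_assoc]
  have hB0 : 0 ≤ B := by
    apply mul_nonneg (Real.exp_pos _).le
    rw [hsubPr']
    exact Finset.sum_nonneg fun a _ => mul_nonneg (hw'nn a) (hPnn a)
  have hF_le_one : ∀ b : Finset V, F b ≤ 1 := by
    intro b
    calc F b ≤ ∑ a ∈ D'.powerset, w' a * 1 :=
          Finset.sum_le_sum fun a _ => mul_le_mul_of_nonneg_left (hP1 _) (hw'nn a)
      _ = 1 := by simpa using sum_weights ξ D'
  have hF_nn : ∀ b : Finset V, 0 ≤ F b := fun b =>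
    Finset.sum_nonneg fun a _ => mul_nonneg (hw'nn a) (hPnn _)
  have hF_le_B : ∀ b ∈ G.powerset, b.card ≤ T → F b ≤ B := by
    intro b hb hbT
    have hbG : b ⊆ G := Finset.mem_powerset.mp hb
    have hbound : ∀ a ∈ D'.powerset, P (a ∪ b) ≤ Real.exp ((T : ℝ) * ε) * P a := by
      intro a ha
      have haD' : a ⊆ D' := Finset.mem_powerset.mp ha
      have hdb : Disjoint b a := (hdisj.symm.mono hbG haD')
      have h1 := group_priv A ε hε hDP C hC b a hdb
      have hexp : Real.exp ((b.card : ℝ) * ε) ≤ Real.exp ((T : ℝ) * ε) :=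
        Real.exp_le_exp.mpr (mul_le_mul_of_nonneg_right (Nat.cast_le.mpr hbT) hε)
      calc P (a ∪ b) ≤ Real.exp ((b.card : ℝ) * ε) * P a := h1
        _ ≤ Real.exp ((T : ℝ) * ε) * P a := mul_le_mul_of_nonneg_right hexp (hPnn a)
    calc F b ≤ ∑ a ∈ D'.powerset, w' a * (Real.exp ((T : ℝ) * ε) * P a) :=
          Finset.sum_le_sum fun a ha => mul_le_mul_of_nonneg_left (hbound a ha) (hw'nn a)
      _ = B := by
          rw [hBdef, hsubPr', Finset.mul_sum]
          exact Finset.sum_congr rfl fun a _ => by ring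
  have hsplit : subPr A ξ D C
      = ∑ b ∈ G.powerset, ξ ^ b.card * (1 - ξ) ^ (g - b.card) * F b := by
    simp only [subPr]
    rw [← hD, sum_powerset_union_disjoint D' G hdisj]
    rw [Finset.sum_comm]
    refine Finset.sum_congr rfl fun b hb => ?_
    have hbG : b ⊆ G := Finset.mem_powerset.mp hb
    have hbg : b.card ≤ g := hGcard ▸ Finset.card_le_card hbG
    rw [hFdef, Finset.mul_sum]
    refine Finset.sum_congr rfl fun a ha => ?_
    have haD' : a ⊆ D' := Finset.mem_powerset.mp ha
    have hac : a.card ≤ D'.card := Finset.card_le_card haD'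
    have hdab : Disjoint a b := hdisj.mono haD' hbG
    have hcard : (a ∪ b).card = a.card + b.card := Finset.card_union_of_disjoint hdab
    have hexp : (D' ∪ G).card - (a.card + b.card) = (g - b.card) + (D'.card - a.card) := by
      rw [hD, hDcard]; omega
    rw [hcard, hexp, pow_add, pow_add]
    simp only [hw'def, hPdef]
    ring
  have htot : ∑ j ∈ Finset.range (g + 1),
      (g.choose j : ℝ) * ξ ^ j * (1 - ξ) ^ (g - j) = 1 := by
    have h := add_pow ξ (1 - ξ) g
    have h1 : ξ + (1 - ξ) = 1 := by ring
    rw [h1, one_pow] at h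
    calc ∑ j ∈ Finset.range (g + 1), (g.choose j : ℝ) * ξ ^ j * (1 - ξ) ^ (g - j)
        = ∑ j ∈ Finset.range (g + 1), ξ ^ j * (1 - ξ) ^ (g - j) * (g.choose j : ℝ) :=
          Finset.sum_congr rfl fun k _ => by ring
      _ = 1 := h.symm
  set s : ℝ := ∑ j ∈ Finset.range (T + 1),
      (g.choose j : ℝ) * ξ ^ j * (1 - ξ) ^ (g - j) with hsdef
  have hs1 : s ≤ 1 := by
    rw [hsdef]
    calc ∑ j ∈ Finset.range (T + 1), (g.choose j : ℝ) * ξ ^ j * (1 - ξ) ^ (g - j)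
        ≤ ∑ j ∈ Finset.range (g + 1), (g.choose j : ℝ) * ξ ^ j * (1 - ξ) ^ (g - j) := by
          refine Finset.sum_le_sum_of_subset_of_nonneg ?_ fun j _ _ => by positivity
          exact Finset.range_subset_range.mpr (by omega)
      _ = 1 := htot
  set f : ℕ → ℝ := fun j => ξ ^ j * (1 - ξ) ^ (g - j) * (if j ≤ T then B else 1)
    with hfdef
  have hstep : subPr A ξ D C ≤ ∑ b ∈ G.powerset, f b.card := by
    rw [hsplit]
    refine Finset.sum_le_sum fun b hb => ?_
    have hwnn : (0:ℝ) ≤ ξ ^ b.card * (1 - ξ) ^ (g - b.card) :=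
      mul_nonneg (pow_nonneg hξ0.le _) (pow_nonneg hξ1' _)
    rw [hfdef]
    by_cases hbT : b.card ≤ T
    · simp only [hbT, if_true]
      exact mul_le_mul_of_nonneg_left (hF_le_B b hb hbT) hwnn
    · simp only [hbT, if_false]
      exact mul_le_mul_of_nonneg_left (hF_le_one b) hwnn
  have hgroup : ∑ b ∈ G.powerset, f b.card
      = ∑ j ∈ Finset.range (g + 1), (g.choose j : ℝ) * f j := by
    rw [Finset.sum_powerset_apply_card, hGcard]
    exact Finset.sum_congr rfl fun j _ => by rw [nsmul_eq_mul]
  have hsplitrange : ∑ j ∈ Finset.range (g + 1), (g.choose j : ℝ) * f j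
      = s * B + ∑ j ∈ Finset.Ico (T + 1) (g + 1),
          (g.choose j : ℝ) * ξ ^ j * (1 - ξ) ^ (g - j) := by
    rw [Finset.range_eq_Ico,
      ← Finset.sum_Ico_consecutive _ (Nat.zero_le (T + 1)) (by omega : T + 1 ≤ g + 1)]
    congr 1
    · rw [hsdef, Finset.sum_mul, ← Finset.range_eq_Ico]
      refine Finset.sum_congr rfl fun j hj => ?_
      have hjT : j ≤ T := by simpa [Nat.lt_succ_iff] using Finset.mem_range.mp hj
      rw [hfdef]; simp only [hjT, if_true]; ring
    · refine Finset.sum_congr rfl fun j hj => ?_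
      have hjT : ¬ j ≤ T := by
        have := (Finset.mem_Ico.mp hj).1; omega
      rw [hfdef]; simp only [hjT, if_false]; ring
  have hIco : ∑ j ∈ Finset.Ico (T + 1) (g + 1),
      (g.choose j : ℝ) * ξ ^ j * (1 - ξ) ^ (g - j) = 1 - s := by
    have h3 : s + ∑ j ∈ Finset.Ico (T + 1) (g + 1),
        (g.choose j : ℝ) * ξ ^ j * (1 - ξ) ^ (g - j)
        = ∑ j ∈ Finset.range (g + 1),
          (g.choose j : ℝ) * ξ ^ j * (1 - ξ) ^ (g - j) := by
      rw [hsdef]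
      simp only [Finset.range_eq_Ico]
      exact Finset.sum_Ico_consecutive _ (Nat.zero_le _) (by omega)
    linarith [htot]
  calc subPr A ξ D C ≤ ∑ b ∈ G.powerset, f b.card := hstep
    _ = s * B + ∑ j ∈ Finset.Ico (T + 1) (g + 1),
          (g.choose j : ℝ) * ξ ^ j * (1 - ξ) ^ (g - j) := by rw [hgroup, hsplitrange]
    _ = s * B + (1 - s) := by rw [hIco]
    _ ≤ B + (1 - s) := by nlinarith
    _ = Real.exp ((T : ℝ) * ε) * subPr A ξ D' C + (1 - s) := by rw [hBdef]
end
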